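/- arXiv:2211.07988 — 6 statements merged into one kernel-verified Lean document; each statement's English description precedes it below -/
import Mathlib

section
/- There is an absolute constant c > 0 such that for every positive integer n, the number of sum-free subsets S of the integer interval [1, n] whose least element is greater than n/3 (i.e., every element s ∈ S satisfies 3s > n) does not exceed c · 2^{n/2}. -/
/-!
Let `s` be the least element of such a set `S`. If `2s > n`, then `S \ {s}` is an arbitrary subset
of `(s, n]`, which leaves at most `2^(n-s)` choices. Otherwise `S` is determined by its parts in
`(s, n - s]`, `(n - s, 2s]` and `(2s, n]`. The middle part is free; with `m = n - 2s`, the outer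
parts shifted down into `[1, m]` form a pair `(L, H)` with `H` disjoint from `L` and from `L + L`,
because `S` is sum-free and contains `s`. There are at most `10 (8/3)^m` such pairs: if `ℓ` is the
least element of `L`, then `H` avoids `L ∪ (L + ℓ)`, and the sum of `2^-|L ∪ (L + ℓ)|` over all `L`
is a transfer-matrix count along the chains `x, x + ℓ, x + 2ℓ, …`, which can be bounded by
induction on the set, removing one chain start at a time. As `(8/3)^2 < 8`, the bound
`10 (8/3)^(n-2s) 2^(3s-n)` is `2^(n/2)` times a factor that decays geometrically in `n/2 - s`,
so the sum over `s` is `O(2^(n/2))`.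
-/

open Finset

namespace CameronErdos

lemma sum_pow_le_of_injOn {ι : Type*} {s : Finset ι} {f : ι → ℕ} (hf : Set.InjOn f s) {r : ℝ}
    (hr₀ : 0 ≤ r) (hr₁ : r < 1) : ∑ i ∈ s, r ^ f i ≤ (1 - r)⁻¹ := by
  rw [← sum_image hf, ← tsum_geometric_of_lt_one hr₀ hr₁]
  exact (summable_geometric_of_lt_one hr₀ hr₁).sum_le_tsum _ fun _ _ => pow_nonneg hr₀ _

lemma eight_thirds_pow_mul_two_pow_le {e₁ e₂ k n : ℕ} (hn : 3 * e₁ + 2 * e₂ = n)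
    (hk : 2 * k ≤ e₁) : (8 / 3 : ℝ) ^ e₁ * 2 ^ e₂ ≤ √2 ^ n * (8 / 9) ^ k := by
  have h2 : √2 ^ 2 = 2 := Real.sq_sqrt zero_le_two
  have hr : 0 ≤ 2 * √2 / 3 := by positivity
  have hr1 : 2 * √2 / 3 ≤ 1 := by nlinarith [Real.sqrt_nonneg 2]
  calc (8 / 3 : ℝ) ^ e₁ * 2 ^ e₂ = (2 * √2) ^ e₁ * 2 ^ e₂ * (2 * √2 / 3) ^ e₁ := by
        rw [mul_right_comm, ← mul_pow]
        congr 2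
        linear_combination (-4 / 3 : ℝ) * h2
    _ ≤ (2 * √2) ^ e₁ * 2 ^ e₂ * (2 * √2 / 3) ^ (2 * k) :=
        mul_le_mul_of_nonneg_left (pow_le_pow_of_le_one hr hr1 hk) (by positivity)
    _ = √2 ^ n * (8 / 9) ^ k := by
        have h3 : (2 * √2 / 3) ^ 2 = 8 / 9 := by rw [div_pow, mul_pow, h2]; norm_num
        have h4 : √2 ^ 3 = 2 * √2 := by rw [pow_succ, h2, mul_comm]
        simp only [← hn, pow_add, pow_mul, h2, h3, h4]

lemma two_pow_le_sqrt_two_pow_mul {j k n : ℕ} (h : 2 * (j + k) ≤ n) :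
    (2 : ℝ) ^ j ≤ √2 ^ n * (1 / 2) ^ k := by
  have h2 : √2 ^ 2 = 2 := Real.sq_sqrt zero_le_two
  calc (2 : ℝ) ^ j = √2 ^ (2 * (j + k)) * (1 / 2) ^ k := by
        rw [pow_mul, h2, pow_add, mul_assoc, ← mul_pow]
        norm_num
    _ ≤ √2 ^ n * (1 / 2) ^ k := by
        gcongr
        exact Real.one_le_sqrt.2 one_le_two

noncomputable def withMin (𝒜 : Finset (Finset ℤ)) (s : ℕ) : Finset (Finset ℤ) :=
  {S ∈ 𝒜 | (s : ℤ) ∈ S ∧ ∀ x ∈ S, (s : ℤ) ≤ x}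

lemma sum_le_add_sum_withMin {𝒜 : Finset (Finset ℤ)} {n : ℕ} (h𝒜 : ∀ S ∈ 𝒜, S ⊆ Icc 1 (n : ℤ))
    {f : Finset ℤ → ℝ} (hf : ∀ S, 0 ≤ f S) :
    ∑ S ∈ 𝒜, f S ≤ f ∅ + ∑ s ∈ Icc 1 n, ∑ S ∈ withMin 𝒜 s, f S := by
  have hcover : 𝒜 ⊆ insert ∅ ((Icc 1 n).biUnion (withMin 𝒜)) := by
    intro S hS
    rcases S.eq_empty_or_nonempty with rfl | hne
    · exact mem_insert_self _ _
    have hmin := mem_Icc.1 (h𝒜 S hS (S.min'_mem hne))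
    refine mem_insert_of_mem (mem_biUnion.2 ⟨(S.min' hne).toNat, mem_Icc.2 (by omega), ?_⟩)
    rw [withMin, mem_filter, Int.toNat_of_nonneg (by omega)]
    exact ⟨hS, S.min'_mem hne, S.min'_le⟩
  have hdisj : (Icc 1 n : Set ℕ).PairwiseDisjoint (withMin 𝒜) := by
    intro s _ t _ hst
    refine disjoint_left.2 fun S hs ht => hst ?_
    obtain ⟨-, hsS, hs⟩ := mem_filter.1 hs
    obtain ⟨-, htS, ht⟩ := mem_filter.1 ht
    exact_mod_cast le_antisymm (hs _ htS) (ht _ hsS)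
  have hempty : ∅ ∉ (Icc 1 n).biUnion (withMin 𝒜) := by simp [withMin]
  calc ∑ S ∈ 𝒜, f S ≤ ∑ S ∈ insert ∅ ((Icc 1 n).biUnion (withMin 𝒜)), f S :=
        sum_le_sum_of_subset_of_nonneg hcover fun S _ _ => hf S
    _ = f ∅ + ∑ s ∈ Icc 1 n, ∑ S ∈ withMin 𝒜 s, f S := by rw [sum_insert hempty, sum_biUnion hdisj]

section ChainWeight

variable (d : ℤ)

def gain (P L : Finset ℤ) : ℕ := #{x ∈ L | x + d ∈ P \ L}

noncomputable def weight (P L : Finset ℤ) : ℝ := (1 / 2) ^ (#L + gain d P L)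

noncomputable def phi (P : Finset ℤ) : ℝ := ∑ L ∈ P.powerset, weight d P L

noncomputable def headSum (v : ℤ) (Q : Finset ℤ) : ℝ :=
  ∑ L ∈ Q.powerset, weight d (insert v Q) (insert v L)

def ends (P : Finset ℤ) : ℕ := #{x ∈ P | x + d ∉ P}

-- `phi` is multiplicative over the maximal chains `x, x + d, x + 2d, …` in `P`, and a chain with
-- `k` elements contributes at most `(9/8) (4/3)^k`, with equality for `k = 1, 2`.
noncomputable def bound (P : Finset ℤ) : ℝ := (9 / 8) ^ ends d P * (4 / 3) ^ #P

lemma weight_nonneg (P L : Finset ℤ) : 0 ≤ weight d P L := by unfold weight; positivity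

lemma bound_nonneg (P : Finset ℤ) : 0 ≤ bound d P := by unfold bound; positivity

variable {d}

lemma add_ne_of_sub_notMem {v x : ℤ} {Q : Finset ℤ} (hv : v - d ∉ Q) (hx : x ∈ Q) :
    x + d ≠ v := by
  rintro rfl
  simp_all

lemma weight_insert {v : ℤ} {Q L : Finset ℤ} (hv : v - d ∉ Q) (hL : L ⊆ Q) :
    weight d (insert v Q) L = weight d Q L := by
  unfold weight gain
  congr 3
  refine filter_congr fun x hx => ?_
  simp [add_ne_of_sub_notMem hv (hL hx)]

lemma gain_insert_insert (hd : 0 < d) {v : ℤ} {Q L : Finset ℤ} (hvQ : v ∉ Q) (hv : v - d ∉ Q)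
    (hL : L ⊆ Q) :
    gain d (insert v Q) (insert v L) = gain d Q L + if v + d ∈ Q \ L then 1 else 0 := by
  have hvL : v ∉ L := fun h => hvQ (hL h)
  have hvv : v + d ≠ v := by omega
  unfold gain
  rw [filter_insert]
  have hrest : {x ∈ L | x + d ∈ insert v Q \ insert v L} = {x ∈ L | x + d ∈ Q \ L} :=
    filter_congr fun x hx => by simp [add_ne_of_sub_notMem hv (hL hx)]
  have hhead : (v + d ∈ insert v Q \ insert v L) ↔ v + d ∈ Q \ L := by simp [hvv]
  split_ifs with h₁ h₂ h₂
  · rw [card_insert_of_notMem (fun h => hvL (mem_filter.1 h).1), hrest]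
  · exact absurd (hhead.1 h₁) h₂
  · exact absurd (hhead.2 h₂) h₁
  · rw [hrest, add_zero]

lemma weight_insert_insert (hd : 0 < d) {v : ℤ} {Q L : Finset ℤ} (hvQ : v ∉ Q)
    (hv : v - d ∉ Q) (hL : L ⊆ Q) :
    weight d (insert v Q) (insert v L) =
      (1 / 2) * (if v + d ∈ Q \ L then 1 / 2 else 1) * weight d Q L := by
  unfold weight
  rw [card_insert_of_notMem (fun h => hvQ (hL h)), gain_insert_insert hd hvQ hv hL]
  split_ifs <;> ring

lemma phi_insert {v : ℤ} {Q : Finset ℤ} (hvQ : v ∉ Q) (hv : v - d ∉ Q) :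
    phi d (insert v Q) = phi d Q + headSum d v Q := by
  unfold phi headSum
  rw [sum_powerset_insert hvQ]
  congr 1
  exact sum_congr rfl fun L hL => weight_insert hv (mem_powerset.1 hL)

lemma headSum_of_notMem (hd : 0 < d) {v : ℤ} {Q : Finset ℤ} (hvQ : v ∉ Q) (hv : v - d ∉ Q)
    (hw : v + d ∉ Q) : headSum d v Q = phi d Q / 2 := by
  unfold headSum phi
  rw [sum_div]
  refine sum_congr rfl fun L hL => ?_
  rw [weight_insert_insert hd hvQ hv (mem_powerset.1 hL), if_neg (fun h => hw (mem_sdiff.1 h).1)]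
  ring

lemma headSum_of_mem (hd : 0 < d) {v : ℤ} {Q : Finset ℤ} (hvQ : v ∉ Q) (hv : v - d ∉ Q)
    (hw : v + d ∈ Q) :
    headSum d v Q = phi d Q / 4 + headSum d (v + d) (Q.erase (v + d)) / 4 := by
  have hsplit : headSum d v Q =
      ∑ L ∈ Q.powerset, (weight d Q L / 4 + if v + d ∈ L then weight d Q L / 4 else 0) := by
    refine sum_congr rfl fun L hL => ?_
    rw [weight_insert_insert hd hvQ hv (mem_powerset.1 hL)]
    by_cases h : v + d ∈ L
    · rw [if_neg fun h' => (mem_sdiff.1 h').2 h, if_pos h]; ring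
    · rw [if_pos (mem_sdiff.2 ⟨hw, h⟩), if_neg h]; ring
  rw [hsplit, sum_add_distrib, ← sum_div, phi]
  congr 1
  obtain ⟨R, hwR, rfl⟩ : ∃ R, v + d ∉ R ∧ Q = insert (v + d) R :=
    ⟨Q.erase (v + d), notMem_erase _ _, (insert_erase hw).symm⟩
  rw [sum_powerset_insert hwR, erase_insert hwR, headSum, sum_div]
  have hR : ∀ L ∈ R.powerset, v + d ∉ L := fun L hL h => hwR (mem_powerset.1 hL h)
  simp +contextual [hR]

lemma ends_insert (hd : 0 < d) {v : ℤ} {Q : Finset ℤ} (hvQ : v ∉ Q) (hv : v - d ∉ Q) :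
    ends d (insert v Q) = ends d Q + if v + d ∈ Q then 0 else 1 := by
  have hvv : v + d ≠ v := by omega
  unfold ends
  rw [filter_insert]
  have hrest : {x ∈ Q | x + d ∉ insert v Q} = {x ∈ Q | x + d ∉ Q} :=
    filter_congr fun x hx => by simp [add_ne_of_sub_notMem hv hx]
  by_cases hw : v + d ∈ Q
  · rw [if_neg (by simp [hw]), hrest, if_pos hw, add_zero]
  · rw [if_pos (by simp [hvv, hw]), card_insert_of_notMem (fun h => hvQ (mem_filter.1 h).1),
      hrest, if_neg hw]

lemma bound_insert_of_mem (hd : 0 < d) {v : ℤ} {Q : Finset ℤ} (hvQ : v ∉ Q) (hv : v - d ∉ Q)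
    (hw : v + d ∈ Q) : bound d (insert v Q) = 4 / 3 * bound d Q := by
  rw [bound, bound, ends_insert hd hvQ hv, if_pos hw, card_insert_of_notMem hvQ]
  ring

lemma bound_insert_of_notMem (hd : 0 < d) {v : ℤ} {Q : Finset ℤ} (hvQ : v ∉ Q)
    (hv : v - d ∉ Q) (hw : v + d ∉ Q) : bound d (insert v Q) = 3 / 2 * bound d Q := by
  rw [bound, bound, ends_insert hd hvQ hv, if_neg hw, card_insert_of_notMem hvQ]
  ring

lemma headSum_le (hd : 0 < d) {Q : Finset ℤ} (hQ : ∀ P ⊆ Q, phi d P ≤ bound d P) {v : ℤ}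
    (hvQ : v ∉ Q) (hv : v - d ∉ Q) (hw : v + d ∈ Q) : headSum d v Q ≤ bound d Q / 3 := by
  induction Q using Finset.strongInduction generalizing v with
  | H Q ih =>
  obtain ⟨R, hwR, rfl⟩ : ∃ R, v + d ∉ R ∧ Q = insert (v + d) R :=
    ⟨Q.erase (v + d), notMem_erase _ _, (insert_erase hw).symm⟩
  have hvR : v + d - d ∉ R := by
    rw [add_sub_cancel_right]
    exact fun h => hvQ (mem_insert_of_mem h)
  have hphiQ := hQ _ subset_rfl
  rw [headSum_of_mem hd hvQ hv hw, erase_insert hwR]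
  by_cases hw' : v + d + d ∈ R
  · have hhead := ih R (ssubset_insert hwR) (fun P hP => hQ P (hP.trans (subset_insert _ _)))
      hwR hvR hw'
    have hbound := bound_insert_of_mem hd hwR hvR hw'
    linarith [bound_nonneg d R]
  · have hphiR := hQ R (subset_insert _ _)
    have hbound := bound_insert_of_notMem hd hwR hvR hw'
    rw [headSum_of_notMem hd hwR hvR hw']
    linarith

theorem phi_le_bound (hd : 0 < d) (P : Finset ℤ) : phi d P ≤ bound d P := by
  induction P using Finset.strongInduction with
  | H P ih =>
  rcases P.eq_empty_or_nonempty with rfl | hP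
  · simp [phi, bound, weight, gain, ends]
  obtain ⟨v, Q, hvQ, hv, rfl⟩ : ∃ v Q, v ∉ Q ∧ v - d ∉ Q ∧ P = insert v Q := by
    refine ⟨P.min' hP, P.erase (P.min' hP), notMem_erase _ _, fun h => ?_,
      (insert_erase (P.min'_mem hP)).symm⟩
    have := P.min'_le _ (mem_of_mem_erase h)
    omega
  have hQ : ∀ P ⊆ Q, phi d P ≤ bound d P := fun P hP =>
    ih P (hP.trans_ssubset (ssubset_insert hvQ))
  rw [phi_insert hvQ hv]
  by_cases hw : v + d ∈ Q
  · rw [bound_insert_of_mem hd hvQ hv hw]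
    linarith [hQ Q subset_rfl, headSum_le hd hQ hvQ hv hw]
  · rw [bound_insert_of_notMem hd hvQ hv hw, headSum_of_notMem hd hvQ hv hw]
    linarith [hQ Q subset_rfl]

lemma ends_Icc_le (hd : 0 ≤ d) (a b : ℤ) : ends d (Icc a b) ≤ d.toNat := by
  calc ends d (Icc a b) ≤ #(Icc (b - d + 1) b) := by
        refine card_le_card fun x hx => ?_
        simp only [mem_filter, mem_Icc] at hx ⊢
        omega
    _ = d.toNat := by rw [Int.card_Icc]; congr 1; ring

lemma bound_Icc_le {ℓ m : ℕ} (hℓ : ℓ ≤ m + 1) :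
    bound ℓ (Icc (ℓ : ℤ) m) ≤ (4 / 3) ^ (m + 1) * (27 / 32) ^ ℓ := by
  have hcard : #(Icc (ℓ : ℤ) m) = m + 1 - ℓ := by rw [Int.card_Icc]; omega
  calc bound ℓ (Icc (ℓ : ℤ) m) ≤ (9 / 8) ^ ℓ * (4 / 3) ^ (m + 1 - ℓ) := by
        rw [bound, hcard]
        gcongr
        · norm_num
        · simpa using ends_Icc_le (Int.natCast_nonneg ℓ) ℓ m
    _ = (4 / 3) ^ (m + 1) * (27 / 32) ^ ℓ := by
        rw [← Nat.sub_add_cancel hℓ, pow_add, Nat.add_sub_cancel, mul_assoc, ← mul_pow]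
        norm_num
        ring

end ChainWeight

def Compatible (L H : Finset ℤ) : Prop := Disjoint L H ∧ ∀ x ∈ L, ∀ y ∈ L, x + y ∉ H

instance : DecidableRel Compatible := fun _ _ => inferInstanceAs (Decidable (_ ∧ _))

-- `H` avoids `L ∪ (L + ℓ)`, which contains the `#L + gain ℓ P L` elements of `L ∪ ((L + ℓ) ∩ P)`.
lemma card_compatible_le {ℓ : ℤ} {L P M : Finset ℤ} (hℓ : ℓ ∈ L) (hLP : L ⊆ P) (hPM : P ⊆ M) :
    (#{H ∈ M.powerset | Compatible L H} : ℝ) ≤ 2 ^ #M * weight ℓ P L := by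
  set G := L ∪ {x ∈ L | x + ℓ ∈ P \ L}.image (· + ℓ)
  have hGM : G ⊆ M := by
    refine union_subset (hLP.trans hPM) fun y hy => ?_
    obtain ⟨x, hx, rfl⟩ := mem_image.1 hy
    exact hPM (mem_sdiff.1 (mem_filter.1 hx).2).1
  have hG : #G = #L + gain ℓ P L := by
    rw [card_union_of_disjoint, card_image_of_injective _ (add_left_injective ℓ), gain]
    refine disjoint_left.2 fun y hyL hy => ?_
    obtain ⟨x, hx, rfl⟩ := mem_image.1 hy
    exact (mem_sdiff.1 (mem_filter.1 hx).2).2 hyL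
  have hsub : {H ∈ M.powerset | Compatible L H} ⊆ (M \ G).powerset := by
    intro H hH
    obtain ⟨hHM, hdisj, hsum⟩ := mem_filter.1 hH
    refine mem_powerset.2 fun y hy => mem_sdiff.2 ⟨mem_powerset.1 hHM hy, fun hyG => ?_⟩
    rcases mem_union.1 hyG with hyL | hyG
    · exact disjoint_left.1 hdisj hyL hy
    · obtain ⟨x, hx, rfl⟩ := mem_image.1 hyG
      exact hsum x (mem_filter.1 hx).1 ℓ hℓ hy
  calc (#{H ∈ M.powerset | Compatible L H} : ℝ) ≤ #(M \ G).powerset := by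
        exact_mod_cast card_le_card hsub
    _ = 2 ^ #M * (2 ^ #G)⁻¹ := by
        rw [card_powerset, card_sdiff_of_subset hGM, Nat.cast_pow, Nat.cast_ofNat,
          pow_sub₀ _ two_ne_zero (card_le_card hGM)]
    _ = 2 ^ #M * weight ℓ P L := by rw [weight, hG, one_div, inv_pow]

lemma sum_card_compatible_withMin_le {m ℓ : ℕ} (hℓ : ℓ ∈ Icc 1 m) :
    ∑ L ∈ withMin (Icc 1 (m : ℤ)).powerset ℓ,
        (#{H ∈ (Icc 1 (m : ℤ)).powerset | Compatible L H} : ℝ) ≤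
      2 ^ m * ((4 / 3) ^ (m + 1) * (27 / 32) ^ ℓ) := by
  have hℓ := mem_Icc.1 hℓ
  have hM : #(Icc 1 (m : ℤ)) = m := by simp
  have hsub : withMin (Icc 1 (m : ℤ)).powerset ℓ ⊆ (Icc (ℓ : ℤ) m).powerset := by
    intro L hL
    obtain ⟨hLM, -, hmin⟩ := mem_filter.1 hL
    exact mem_powerset.2 fun x hx => mem_Icc.2 ⟨hmin x hx, (mem_Icc.1 (mem_powerset.1 hLM hx)).2⟩
  calc ∑ L ∈ withMin (Icc 1 (m : ℤ)).powerset ℓ,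
        (#{H ∈ (Icc 1 (m : ℤ)).powerset | Compatible L H} : ℝ)
      ≤ ∑ L ∈ withMin (Icc 1 (m : ℤ)).powerset ℓ, 2 ^ m * weight ℓ (Icc (ℓ : ℤ) m) L := by
        refine sum_le_sum fun L hL => ?_
        simpa only [hM] using card_compatible_le (M := Icc 1 (m : ℤ)) (mem_filter.1 hL).2.1
          (mem_powerset.1 (hsub hL)) (Icc_subset_Icc (by omega) le_rfl)
    _ ≤ 2 ^ m * phi ℓ (Icc (ℓ : ℤ) m) := by
        rw [← mul_sum]
        gcongr
        exact sum_le_sum_of_subset_of_nonneg hsub fun L _ _ => weight_nonneg _ _ _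
    _ ≤ 2 ^ m * ((4 / 3) ^ (m + 1) * (27 / 32) ^ ℓ) := by
        gcongr
        exact (phi_le_bound (by omega) _).trans (bound_Icc_le (by omega))

lemma sum_card_compatible_le (m : ℕ) :
    ∑ L ∈ (Icc 1 (m : ℤ)).powerset, (#{H ∈ (Icc 1 (m : ℤ)).powerset | Compatible L H} : ℝ) ≤
      10 * (8 / 3) ^ m := by
  have hgeom : ∑ ℓ ∈ Icc 1 m, (27 / 32 : ℝ) ^ ℓ ≤ 32 / 5 := by
    refine (sum_pow_le_of_injOn (f := id) (Set.injOn_id _) ?_ ?_).trans_eq ?_ <;> norm_num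
  have hempty : (#{H ∈ (Icc 1 (m : ℤ)).powerset | Compatible ∅ H} : ℝ) ≤ 2 ^ m := by
    exact_mod_cast (card_filter_le _ _).trans (by simp)
  calc ∑ L ∈ (Icc 1 (m : ℤ)).powerset, (#{H ∈ (Icc 1 (m : ℤ)).powerset | Compatible L H} : ℝ)
      ≤ 2 ^ m + ∑ ℓ ∈ Icc 1 m, 2 ^ m * ((4 / 3) ^ (m + 1) * (27 / 32) ^ ℓ) :=
        (sum_le_add_sum_withMin (fun _ => mem_powerset.1) fun _ => Nat.cast_nonneg _).trans
          (add_le_add hempty (sum_le_sum fun _ => sum_card_compatible_withMin_le))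
    _ = 2 ^ m + 2 ^ m * (4 / 3) ^ (m + 1) * ∑ ℓ ∈ Icc 1 m, (27 / 32 : ℝ) ^ ℓ := by
        rw [mul_assoc, mul_sum, mul_sum]
    _ ≤ 2 ^ m + 2 ^ m * (4 / 3) ^ (m + 1) * (32 / 5) := by gcongr
    _ ≤ 10 * (8 / 3) ^ m := by
        have h : (8 / 3 : ℝ) ^ m = 2 ^ m * (4 / 3) ^ m := by rw [← mul_pow]; norm_num
        have hx : (0 : ℝ) < 2 ^ m := by positivity
        have hy : (1 : ℝ) ≤ (4 / 3) ^ m := one_le_pow₀ (by norm_num)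
        rw [h, pow_succ]
        nlinarith [mul_le_mul_of_nonneg_left hy hx.le]

noncomputable def largeSumFreeSets (n : ℕ) : Finset (Finset ℤ) :=
  {S ∈ (Icc (1 : ℤ) n).powerset | (∀ x ∈ S, ∀ y ∈ S, x + y ∉ S) ∧ ∀ s ∈ S, (n : ℤ) < 3 * s}

noncomputable def window (S : Finset ℤ) (a : ℤ) (k : ℕ) : Finset ℤ :=
  {j ∈ Icc 1 (k : ℤ) | j + a ∈ S}

lemma mem_window {S : Finset ℤ} {a j : ℤ} {k : ℕ} :
    j ∈ window S a k ↔ (1 ≤ j ∧ j ≤ k) ∧ j + a ∈ S := by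
  simp [window]

lemma mem_iff_of_window_eq {S T : Finset ℤ} {a x : ℤ} {k : ℕ} (h : window S a k = window T a k)
    (hx : a < x ∧ x ≤ a + k) : x ∈ S ↔ x ∈ T := by
  have := congrArg (x - a ∈ ·) h
  simpa [mem_window, show 1 ≤ x - a ∧ x - a ≤ k by omega] using this

section LargeSumFree

variable {n s : ℕ}

lemma mem_withMin_largeSumFreeSets {S : Finset ℤ} :
    S ∈ withMin (largeSumFreeSets n) s ↔ S ⊆ Icc 1 (n : ℤ) ∧ (∀ x ∈ S, ∀ y ∈ S, x + y ∉ S) ∧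
      (∀ x ∈ S, (n : ℤ) < 3 * x) ∧ (s : ℤ) ∈ S ∧ ∀ x ∈ S, (s : ℤ) ≤ x := by
  simp [withMin, largeSumFreeSets, and_assoc]

lemma withMin_largeSumFreeSets_eq_empty (h : 3 * s ≤ n) : withMin (largeSumFreeSets n) s = ∅ :=
  eq_empty_of_forall_notMem fun S hS => by
    obtain ⟨-, -, hlarge, hs, -⟩ := mem_withMin_largeSumFreeSets.1 hS
    have := hlarge _ hs
    omega

lemma eq_of_mem_withMin_largeSumFreeSets {S T : Finset ℤ} (hS : S ∈ withMin (largeSumFreeSets n) s)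
    (hT : T ∈ withMin (largeSumFreeSets n) s) (h : ∀ x : ℤ, s < x ∧ x ≤ n → (x ∈ S ↔ x ∈ T)) :
    S = T := by
  obtain ⟨hSn, -, -, hsS, hSs⟩ := mem_withMin_largeSumFreeSets.1 hS
  obtain ⟨hTn, -, -, hsT, hTs⟩ := mem_withMin_largeSumFreeSets.1 hT
  ext x
  by_cases hx : (s : ℤ) < x ∧ x ≤ n
  · exact h x hx
  constructor <;> intro hxU
  · have := mem_Icc.1 (hSn hxU)
    obtain rfl : x = s := by have := hSs x hxU; omega
    exact hsT
  · have := mem_Icc.1 (hTn hxU)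
    obtain rfl : x = s := by have := hTs x hxU; omega
    exact hsS

lemma card_withMin_largeSumFreeSets_le : #(withMin (largeSumFreeSets n) s) ≤ 2 ^ (n - s) := by
  calc #(withMin (largeSumFreeSets n) s) ≤ #(Icc 1 ((n - s : ℕ) : ℤ)).powerset := by
        refine card_le_card_of_injOn (window · s (n - s))
          (fun S _ => mem_powerset.2 (filter_subset _ _)) fun S hS T hT h => ?_
        exact eq_of_mem_withMin_largeSumFreeSets hS hT fun x hx =>
          mem_iff_of_window_eq h (by omega)
    _ = 2 ^ (n - s) := by simp

lemma compatible_window {S : Finset ℤ} (hS : S ∈ withMin (largeSumFreeSets n) s) (k : ℕ) :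
    Compatible (window S s k) (window S (2 * s) k) := by
  obtain ⟨-, hfree, -, hsS, -⟩ := mem_withMin_largeSumFreeSets.1 hS
  refine ⟨disjoint_left.2 fun j hjL hjH => ?_, fun i hi i' hi' hH => ?_⟩
  · rw [mem_window] at hjL hjH
    exact hfree _ hsS _ hjL.2 (by convert hjH.2 using 1; ring)
  · rw [mem_window] at hi hi' hH
    exact hfree _ hi.2 _ hi'.2 (by convert hH.2 using 1; ring)

lemma card_withMin_largeSumFreeSets_le_of_lt (h2 : 2 * s ≤ n) (h3 : n < 3 * s) :
    (#(withMin (largeSumFreeSets n) s) : ℝ) ≤ 10 * (8 / 3) ^ (n - 2 * s) * 2 ^ (3 * s - n) := by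
  set m := n - 2 * s
  set u := 3 * s - n
  set M := Icc 1 (m : ℤ)
  have hinj : #(withMin (largeSumFreeSets n) s) ≤
      #((M.powerset.sigma fun L => {H ∈ M.powerset | Compatible L H}) ×ˢ
        (Icc 1 (u : ℤ)).powerset) := by
    refine card_le_card_of_injOn
      (fun S => (⟨window S s m, window S (2 * s) m⟩, window S ((n : ℤ) - s) u))
      (fun S hS => ?_) fun S hS T hT h => ?_
    · simp only [coe_product, Set.mem_prod, coe_sigma, Set.mem_sigma_iff, mem_coe, mem_filter,
        mem_powerset]
      exact ⟨⟨filter_subset _ _, filter_subset _ _, compatible_window hS m⟩, filter_subset _ _⟩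
    · simp only [Prod.mk.injEq, Sigma.mk.injEq, heq_eq_eq] at h
      obtain ⟨⟨hL, hH⟩, hU⟩ := h
      refine eq_of_mem_withMin_largeSumFreeSets hS hT fun x hx => ?_
      rcases (by omega : ((s : ℤ) < x ∧ x ≤ s + m) ∨ ((n : ℤ) - s < x ∧ x ≤ (n - s) + u) ∨
        ((2 * s : ℕ) < x ∧ x ≤ (2 * s : ℕ) + m)) with hx | hx | hx
      · exact mem_iff_of_window_eq hL hx
      · exact mem_iff_of_window_eq hU hx
      · exact mem_iff_of_window_eq hH hx
  rw [card_product, card_sigma, card_powerset, Int.card_Icc, add_sub_cancel_right,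
    Int.toNat_natCast] at hinj
  calc (#(withMin (largeSumFreeSets n) s) : ℝ)
      ≤ (∑ L ∈ M.powerset, (#{H ∈ M.powerset | Compatible L H} : ℝ)) * 2 ^ u := by
        exact_mod_cast hinj
    _ ≤ 10 * (8 / 3) ^ m * 2 ^ u := by gcongr; exact sum_card_compatible_le m

lemma card_withMin_largeSumFreeSets_le_of_le_half (hs : s ≤ n / 2) :
    (#(withMin (largeSumFreeSets n) s) : ℝ) ≤ 10 * √2 ^ n * (8 / 9) ^ (n / 2 - s) := by
  by_cases h3 : n < 3 * s
  · calc (#(withMin (largeSumFreeSets n) s) : ℝ)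
        ≤ 10 * ((8 / 3) ^ (n - 2 * s) * 2 ^ (3 * s - n)) := by
          rw [← mul_assoc]
          exact card_withMin_largeSumFreeSets_le_of_lt (by omega) h3
      _ ≤ 10 * (√2 ^ n * (8 / 9) ^ (n / 2 - s)) := by
          gcongr 10 * ?_
          apply eight_thirds_pow_mul_two_pow_le <;> omega
      _ = 10 * √2 ^ n * (8 / 9) ^ (n / 2 - s) := by ring
  · rw [withMin_largeSumFreeSets_eq_empty (by omega), card_empty, Nat.cast_zero]
    positivity

lemma card_withMin_largeSumFreeSets_le_of_half_lt (hs : n / 2 < s) (hsn : s ≤ n) :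
    (#(withMin (largeSumFreeSets n) s) : ℝ) ≤ √2 ^ n * (1 / 2) ^ (s - n / 2 - 1) :=
  calc (#(withMin (largeSumFreeSets n) s) : ℝ) ≤ 2 ^ (n - s) := by
        exact_mod_cast card_withMin_largeSumFreeSets_le
    _ ≤ √2 ^ n * (1 / 2) ^ (s - n / 2 - 1) := two_pow_le_sqrt_two_pow_mul (by omega)

end LargeSumFree

lemma sum_card_withMin_le_of_le_half (n : ℕ) :
    ∑ s ∈ Icc 1 n with s ≤ n / 2, (#(withMin (largeSumFreeSets n) s) : ℝ) ≤ 90 * √2 ^ n := by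
  calc ∑ s ∈ Icc 1 n with s ≤ n / 2, (#(withMin (largeSumFreeSets n) s) : ℝ)
      ≤ ∑ s ∈ Icc 1 n with s ≤ n / 2, 10 * √2 ^ n * (8 / 9) ^ (n / 2 - s) :=
        sum_le_sum fun s hs => card_withMin_largeSumFreeSets_le_of_le_half (mem_filter.1 hs).2
    _ ≤ 10 * √2 ^ n * 9 := by
        rw [← mul_sum]
        gcongr
        refine (sum_pow_le_of_injOn (fun s hs t ht h => ?_) (by norm_num) (by norm_num)).trans_eq
          (by norm_num)
        simp only [coe_filter, mem_Icc, Set.mem_ofPred_eq] at hs ht h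
        omega
    _ = 90 * √2 ^ n := by ring

lemma sum_card_withMin_le_of_half_lt (n : ℕ) :
    ∑ s ∈ Icc 1 n with ¬s ≤ n / 2, (#(withMin (largeSumFreeSets n) s) : ℝ) ≤ 2 * √2 ^ n := by
  calc ∑ s ∈ Icc 1 n with ¬s ≤ n / 2, (#(withMin (largeSumFreeSets n) s) : ℝ)
      ≤ ∑ s ∈ Icc 1 n with ¬s ≤ n / 2, √2 ^ n * (1 / 2) ^ (s - n / 2 - 1) :=
        sum_le_sum fun s hs => card_withMin_largeSumFreeSets_le_of_half_lt
          (not_le.1 (mem_filter.1 hs).2) (mem_Icc.1 (mem_filter.1 hs).1).2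
    _ ≤ √2 ^ n * 2 := by
        rw [← mul_sum]
        gcongr
        refine (sum_pow_le_of_injOn (fun s hs t ht h => ?_) (by norm_num) (by norm_num)).trans_eq
          (by norm_num)
        simp only [coe_filter, mem_Icc, Set.mem_ofPred_eq] at hs ht h
        omega
    _ = 2 * √2 ^ n := by ring

theorem card_largeSumFreeSets_le_sqrt_two_pow (n : ℕ) :
    (#(largeSumFreeSets n) : ℝ) ≤ 93 * √2 ^ n := by
  have hone : (1 : ℝ) ≤ √2 ^ n := one_le_pow₀ (Real.one_le_sqrt.2 one_le_two)
  have hcount := sum_le_add_sum_withMin (𝒜 := largeSumFreeSets n) (n := n)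
    (fun S hS => mem_powerset.1 (mem_filter.1 hS).1) (f := fun _ => 1) fun _ => zero_le_one
  simp only [sum_const, nsmul_one] at hcount
  rw [← sum_filter_add_sum_filter_not _ (· ≤ n / 2)] at hcount
  linarith [sum_card_withMin_le_of_le_half n, sum_card_withMin_le_of_half_lt n]

end CameronErdos

/-- Cameron–Erdős: there is an absolute constant `c > 0` such that the number of
sum-free subsets of `[1, n]` whose every element `s` satisfies `3s > n` is at most
`c · 2^{n/2}`. -/
theorem stmt_5 :
    ∃ c : ℝ, 0 < c ∧ ∀ n : ℕ, 0 < n →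
      (((Finset.Icc (1 : ℤ) n).powerset.filter
          (fun S => (∀ x ∈ S, ∀ y ∈ S, x + y ∉ S) ∧ ∀ s ∈ S, (n : ℤ) < 3 * s)).card : ℝ)
        ≤ c * 2 ^ ((n : ℝ) / 2) := by
  refine ⟨93, by norm_num, fun n _ => ?_⟩
  rw [Real.rpow_div_two_eq_sqrt _ zero_le_two, Real.rpow_natCast]
  exact CameronErdos.card_largeSumFreeSets_le_sqrt_two_pow n
end

section
/- There exists an absolute constant C > 0 such that every finite, undirected, simple k-regular graph on n vertices with k ≥ 1 has at most 2^{(1/2 + C·k^{−1/10})·n} independent sets. -/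
/-!
Container argument. Put `t = k^{1/10}`. Double counting the edges that leave a vertex set `B`
of a `k`-regular graph shows that if `2|B| ≥ (1 + 1/t) n`, some vertex of `B` has at least
`k/t = t^9` neighbours inside `B`. Branching on such a vertex `v` of the current set `A` (either
`v ∉ I` and `v` is discarded, or `v ∈ I` and the closed neighbourhood of `v` is discarded),
every independent set is determined by at most `q` vertices chosen along the way together with a
subset of a residual set of size at most `max R (|A| - q (D + 1))`. With `R ≈ (1 + 1/t) n / 2`,
`D ≈ t^9` and `q ≈ n / (2 t^9)`, the `∑_{j ≤ q} C(n, j) ≤ (e n / q)^q` choices of the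
chosen vertices cost only `2^{O(n/t)}`.
-/

open Finset Real

theorem seventeen_mul_pow_nine_le_two_rpow {t : ℝ} (ht : 1 ≤ t) :
    17 * t ^ 9 ≤ (2 : ℝ) ^ (6 * t ^ 8) := by
  have ht0 : 0 < t := by linarith
  have hlog17 : log 17 ≤ 5 * log 2 := calc
    log 17 ≤ log (2 ^ 5) := log_le_log (by norm_num) (by norm_num)
    _ = 5 * log 2 := by rw [log_pow]; norm_num
  have hlogt : log t ≤ t - 1 := log_le_sub_one_of_pos ht0
  have hbern : 1 + 8 * (t - 1) ≤ t ^ 8 := by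
    simpa using one_add_mul_le_pow (show (-2 : ℝ) ≤ t - 1 by linarith) 8
  have hlog2 : 0.6931471803 < log 2 := log_two_gt_d9
  rw [rpow_def_of_pos two_pos, ← log_le_iff_le_exp (by positivity), log_mul (by norm_num)
    (by positivity), log_pow]
  push_cast
  nlinarith

theorem six_mul_pow_eight_mul_add_le {t n q R : ℝ} (ht : 1 ≤ t) (htn : t ^ 10 ≤ n)
    (hq : 1 ≤ q) (hqn : (q - 1) * (2 * t ^ 9) ≤ n) (hR : R ≤ (1 + t⁻¹) * n / 2 + 1) :
    6 * t ^ 8 * q + R ≤ (1 / 2 + 11 * t⁻¹) * n := by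
  have ht0 : 0 < t := by linarith
  have ht9 : t ^ 9 ≤ n := (pow_le_pow_right₀ ht (by norm_num)).trans htn
  have htn' : t ≤ n := (le_self_pow₀ ht (by norm_num)).trans htn
  have e1 : 6 * t ^ 8 * q ≤ 9 * n * t⁻¹ := calc
    6 * t ^ 8 * q = 6 * (t ^ 9 * q) * t⁻¹ := by field_simp
    _ ≤ 6 * (3 / 2 * n) * t⁻¹ := by gcongr 6 * ?_ * _; linarith
    _ = 9 * n * t⁻¹ := by ring
  have e2 : 1 ≤ n * t⁻¹ := by rw [le_mul_inv_iff₀ ht0]; linarith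
  nlinarith

namespace Nat

theorem sum_range_choose_succ_eq (a q : ℕ) :
    ∑ j ∈ range (q + 2), (a + 1).choose j =
      ∑ j ∈ range (q + 2), a.choose j + ∑ j ∈ range (q + 1), a.choose j := by
  rw [sum_range_succ' _ (q + 1), sum_range_succ' (a.choose ·) (q + 1)]
  simp only [choose_succ_succ', sum_add_distrib, choose_zero_right]
  ring

theorem sum_range_choose_le_exp_mul_div_pow {n q : ℕ} (hq : 0 < q) (hqn : q ≤ n) :
    (∑ j ∈ range (q + 1), n.choose j : ℝ) ≤ (exp 1 * n / q) ^ q := by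
  have hn : (0 : ℝ) < n := by exact_mod_cast hq.trans_le hqn
  set x : ℝ := q / n with hx
  have hx0 : 0 < x := by positivity
  have hx1 : x ≤ 1 := div_le_one_of_le₀ (by exact_mod_cast hqn) hn.le
  have key : (∑ j ∈ range (q + 1), n.choose j : ℝ) * x ^ q ≤ exp 1 ^ q := calc
    _ = ∑ j ∈ range (q + 1), x ^ q * n.choose j := by rw [sum_mul]; simp_rw [mul_comm]
    _ ≤ ∑ j ∈ range (q + 1), x ^ j * n.choose j := by
      gcongr ∑ j ∈ _, ?_ * _ with j hj
      exact pow_le_pow_of_le_one hx0.le hx1 (Nat.lt_succ_iff.mp (mem_range.mp hj))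
    _ ≤ ∑ j ∈ range (n + 1), x ^ j * n.choose j :=
      sum_le_sum_of_subset_of_nonneg (range_subset_range.mpr (by omega))
        fun _ _ _ => by positivity
    _ = (x + 1) ^ n := by rw [add_pow]; simp
    _ ≤ exp x ^ n := by gcongr; linarith [add_one_le_exp x]
    _ = exp 1 ^ q := by rw [← exp_nat_mul, ← exp_nat_mul, hx]; field_simp
  rw [show exp 1 * n / q = exp 1 / x by rw [hx]; field_simp, div_pow, le_div_iff₀ (by positivity)]
  exact key

theorem sum_range_choose_le_two_rpow {n q : ℕ} {t : ℝ} (ht : 1 ≤ t) (hq : 0 < q)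
    (hqn : q ≤ n) (hn : n ≤ 6 * t ^ 9 * q) :
    (∑ j ∈ range (q + 1), n.choose j : ℝ) ≤ 2 ^ (6 * t ^ 8 * q) := calc
  _ ≤ (exp 1 * n / q) ^ q := sum_range_choose_le_exp_mul_div_pow hq hqn
  _ ≤ (17 * t ^ 9) ^ q := by
    gcongr
    rw [div_le_iff₀ (by positivity)]
    nlinarith [mul_le_mul_of_nonneg_left hn (exp_pos 1).le, exp_one_lt_d9]
  _ ≤ (2 ^ (6 * t ^ 8)) ^ q := by gcongr; exact seventeen_mul_pow_nine_le_two_rpow ht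
  _ = _ := by rw [← rpow_natCast, ← rpow_mul two_pos.le]

end Nat

namespace SimpleGraph

variable {V : Type*} (G : SimpleGraph V) [DecidableRel G.Adj]

def indepSubsets (A : Finset V) : Finset (Finset V) :=
  A.powerset.filter (fun s => ∀ x ∈ s, ∀ y ∈ s, ¬ G.Adj x y)

section Regular

variable [Fintype V] [DecidableEq V] {G} {k : ℕ}

theorem IsRegularOfDegree.card_mul_le_sum_card_adj_add (hG : G.IsRegularOfDegree k)
    (B : Finset V) : #B * k ≤ ∑ w ∈ B, #{u ∈ B | G.Adj w u} + #Bᶜ * k := by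
  have hsplit : ∀ w, #{u ∈ B | G.Adj w u} + #{u ∈ Bᶜ | G.Adj w u} = k := fun w => by
    rw [← hG w, ← card_neighborFinset_eq_degree, neighborFinset_eq_filter,
      ← card_filter_add_card_filter_not (s := {u | G.Adj w u}) (· ∈ B)]
    congr 2 <;> ext u <;> simp [and_comm]
  have hout : ∑ w ∈ B, #{u ∈ Bᶜ | G.Adj w u} ≤ #Bᶜ * k := calc
    _ = ∑ u ∈ Bᶜ, #{w ∈ B | G.Adj w u} :=
      sum_card_bipartiteAbove_eq_sum_card_bipartiteBelow _
    _ ≤ ∑ u ∈ Bᶜ, k := sum_le_sum fun u _ => by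
      rw [← hG u, ← card_neighborFinset_eq_degree]
      exact card_le_card fun w hw => by simpa using (mem_filter.mp hw).2.symm
    _ = #Bᶜ * k := by rw [sum_const, smul_eq_mul]
  calc #B * k = ∑ w ∈ B, (#{u ∈ B | G.Adj w u} + #{u ∈ Bᶜ | G.Adj w u}) := by
        simp [hsplit]
    _ ≤ _ := by rw [sum_add_distrib]; gcongr

theorem IsRegularOfDegree.exists_le_card_adj [Nonempty V] (hG : G.IsRegularOfDegree k)
    {ε : ℝ} (hε : 0 ≤ ε) {B : Finset V} (hB : (1 + ε) * Fintype.card V ≤ 2 * #B) :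
    ∃ w ∈ B, k * ε ≤ #{u ∈ B | G.Adj w u} := by
  have hn : (0 : ℝ) < Fintype.card V := by exact_mod_cast Fintype.card_pos
  have hBpos : (0 : ℝ) < #B := by nlinarith
  obtain ⟨w, hw, hmax⟩ := exists_max_image B (fun w => #{u ∈ B | G.Adj w u})
    (card_pos.mp (by exact_mod_cast hBpos))
  refine ⟨w, hw, ?_⟩
  have hsum : #B * k ≤ #B * #{u ∈ B | G.Adj w u} + #Bᶜ * k :=
    (hG.card_mul_le_sum_card_adj_add B).trans
      (by grw [sum_le_card_nsmul B _ _ hmax, smul_eq_mul])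
  have hsumR : (#B : ℝ) * k ≤ #B * #{u ∈ B | G.Adj w u} + (Fintype.card V - #B) * k := by
    rw [← Nat.cast_sub (card_le_univ B), ← card_compl]; exact_mod_cast hsum
  have hεB : ε * #B ≤ 2 * #B - Fintype.card V := by
    nlinarith [show (#B : ℝ) ≤ Fintype.card V by exact_mod_cast card_le_univ B]
  nlinarith

end Regular

section Containers

variable [DecidableEq V]

theorem card_indepSubsets_le_add (A : Finset V) (v : V) :
    #(G.indepSubsets A) ≤
      #(G.indepSubsets (A.erase v)) + #(G.indepSubsets {u ∈ A.erase v | ¬ G.Adj v u}) := by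
  set A₂ := {u ∈ A.erase v | ¬ G.Adj v u}
  suffices hsub :
      G.indepSubsets A ⊆ G.indepSubsets (A.erase v) ∪ (G.indepSubsets A₂).image (insert v) from
    (card_le_card hsub).trans
      ((card_union_le _ _).trans (Nat.add_le_add_left card_image_le _))
  intro I hI
  simp only [indepSubsets, mem_filter, mem_powerset] at hI
  obtain ⟨hIA, hind⟩ := hI
  by_cases hv : v ∈ I
  · refine mem_union_right _ (mem_image.mpr ⟨I.erase v, ?_, insert_erase hv⟩)
    simp only [indepSubsets, mem_filter, mem_powerset]
    refine ⟨fun u hu => ?_,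
      fun x hx y hy => hind x (mem_of_mem_erase hx) y (mem_of_mem_erase hy)⟩
    exact mem_filter.mpr ⟨erase_subset_erase v hIA hu, hind v hv u (mem_of_mem_erase hu)⟩
  · refine mem_union_left _ (mem_filter.mpr ⟨mem_powerset.mpr fun u hu => ?_, hind⟩)
    exact mem_erase.mpr ⟨fun h => hv (h ▸ hu), hIA hu⟩

theorem card_indepSubsets_le {R D : ℕ}
    (hdeg : ∀ B : Finset V, R ≤ #B → ∃ w ∈ B, D ≤ #{u ∈ B | G.Adj w u})
    (q : ℕ) (A : Finset V) :
    #(G.indepSubsets A) ≤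
      (∑ j ∈ range (q + 1), (#A).choose j) * 2 ^ max R (#A - q * (D + 1)) := by
  induction A using Finset.strongInduction generalizing q with
  | H A ih =>
  by_cases hbase : #A < R ∨ q = 0
  · have hA : #A ≤ max R (#A - q * (D + 1)) := by
      rcases hbase with h | rfl
      · exact le_max_of_le_left h.le
      · simp
    have hone : 1 ≤ ∑ j ∈ range (q + 1), (#A).choose j :=
      (single_le_sum (fun _ _ => Nat.zero_le _) (mem_range.mpr q.succ_pos)).trans_eq'
        (Nat.choose_zero_right _)
    calc #(G.indepSubsets A) ≤ #A.powerset := card_le_card (filter_subset _ _)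
      _ ≤ 1 * 2 ^ max R (#A - q * (D + 1)) := by
        rw [card_powerset, one_mul]; exact Nat.pow_le_pow_right two_pos hA
      _ ≤ _ := by gcongr
  obtain ⟨hAR, hq⟩ : R ≤ #A ∧ q ≠ 0 := by omega
  obtain ⟨q, rfl⟩ := Nat.exists_eq_succ_of_ne_zero hq
  obtain ⟨v, hv, hdegv⟩ := hdeg A hAR
  set A₁ := A.erase v
  set A₂ := {u ∈ A.erase v | ¬ G.Adj v u}
  have hA₁ : #A₁ + 1 = #A := card_erase_add_one hv
  have hA₂ : #A₂ + D ≤ #A₁ := by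
    have : #{u ∈ A₁ | G.Adj v u} = #{u ∈ A | G.Adj v u} := by
      rw [filter_erase, erase_eq_of_notMem (by simp)]
    have : #{u ∈ A₁ | G.Adj v u} + #A₂ = #A₁ := card_filter_add_card_filter_not _
    omega
  set M := max R (#A - (q + 1) * (D + 1))
  have h₁ : #(G.indepSubsets A₁) ≤ (∑ j ∈ range (q + 2), (#A₁).choose j) * 2 ^ M := by
    refine (ih A₁ (erase_ssubset hv) (q + 1)).trans
      (Nat.mul_le_mul_left _ (Nat.pow_le_pow_right two_pos ?_))
    omega
  have h₂ : #(G.indepSubsets A₂) ≤ (∑ j ∈ range (q + 1), (#A₁).choose j) * 2 ^ M := by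
    refine (ih A₂ ((filter_subset _ _).trans_ssubset (erase_ssubset hv)) q).trans
      (Nat.mul_le_mul (sum_le_sum fun j _ => Nat.choose_le_choose j (by omega))
        (Nat.pow_le_pow_right two_pos ?_))
    have : (q + 1) * (D + 1) = q * (D + 1) + (D + 1) := by ring
    omega
  calc _ ≤ #(G.indepSubsets A₁) + #(G.indepSubsets A₂) := G.card_indepSubsets_le_add A v
    _ ≤ _ := by
      rw [← hA₁, Nat.sum_range_choose_succ_eq, add_mul]
      exact add_le_add h₁ h₂

theorem card_indepSubsets_univ_le_of_forall_exists [Fintype V] {R D q : ℕ}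
    (hdeg : ∀ B : Finset V, R ≤ #B → ∃ w ∈ B, D ≤ #{u ∈ B | G.Adj w u})
    (hR : Fintype.card V ≤ 2 * R) (hq : Fintype.card V ≤ 2 * (q * (D + 1))) :
    #(G.indepSubsets univ) ≤ (∑ j ∈ range (q + 1), (Fintype.card V).choose j) * 2 ^ R := by
  have := G.card_indepSubsets_le hdeg q univ
  rwa [card_univ, max_eq_left (by omega)] at this

end Containers

theorem card_indepSubsets_univ_le [Fintype V] [DecidableEq V] {t : ℝ} (ht : 1 ≤ t)
    (htn : t ^ 10 ≤ Fintype.card V)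
    (hdeg : ∀ B : Finset V, (1 + t⁻¹) * Fintype.card V ≤ 2 * #B →
      ∃ w ∈ B, t ^ 9 ≤ #{u ∈ B | G.Adj w u}) :
    (#(G.indepSubsets univ) : ℝ) ≤ 2 ^ ((1 / 2 + 11 * t⁻¹) * Fintype.card V) := by
  set n := Fintype.card V
  set D := ⌈t ^ 9⌉₊
  set R := ⌈(1 + t⁻¹) * n / 2⌉₊
  set q := n / (2 * (D + 1)) + 1
  have ht0 : 0 < t := by linarith
  have hD : t ^ 9 ≤ D := Nat.le_ceil _
  have hD' : (D : ℝ) < t ^ 9 + 1 := Nat.ceil_lt_add_one (by positivity)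
  have hR : (1 + t⁻¹) * n / 2 ≤ R := Nat.le_ceil _
  have hR' : (R : ℝ) < (1 + t⁻¹) * n / 2 + 1 := Nat.ceil_lt_add_one (by positivity)
  have hq_lt : n < 2 * (D + 1) * q := Nat.lt_mul_div_succ n (by positivity)
  have hq_le : ((q : ℝ) - 1) * (2 * (D + 1)) ≤ n := by
    have : ((n / (2 * (D + 1)) : ℕ) : ℝ) * (2 * (D + 1)) ≤ n := by
      exact_mod_cast Nat.div_mul_le_self n _
    simpa [q] using this
  have hq_le_n : q ≤ n := by
    have := Nat.div_le_div_left (a := n) (show 2 ≤ 2 * (D + 1) by omega) two_pos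
    have : 1 ≤ n := by exact_mod_cast (one_le_pow₀ ht).trans htn
    omega
  have hcount : #(G.indepSubsets univ) ≤ (∑ j ∈ range (q + 1), n.choose j) * 2 ^ R := by
    refine G.card_indepSubsets_univ_le_of_forall_exists (D := D) (fun B hB => ?_) ?_ ?_
    · obtain ⟨w, hw, hdw⟩ := hdeg B (by linarith [Nat.ceil_le.mp hB])
      exact ⟨w, hw, Nat.ceil_le.mpr hdw⟩
    · have : (n : ℝ) ≤ 2 * R := by nlinarith [inv_pos.mpr ht0]
      exact_mod_cast this
    · linarith [show 2 * (D + 1) * q = 2 * (q * (D + 1)) by ring]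
  have hsmall : (∑ j ∈ range (q + 1), n.choose j : ℝ) ≤ 2 ^ (6 * t ^ 8 * q) := by
    refine Nat.sum_range_choose_le_two_rpow ht (Nat.succ_pos _) hq_le_n ?_
    have : (n : ℝ) < 2 * (D + 1) * q := by exact_mod_cast hq_lt
    nlinarith [one_le_pow₀ (n := 9) ht]
  have hexp : 6 * t ^ 8 * q + R ≤ (1 / 2 + 11 * t⁻¹) * n := by
    have hq1 : (1 : ℝ) ≤ q := by exact_mod_cast Nat.succ_pos _
    refine six_mul_pow_eight_mul_add_le ht htn hq1 (le_trans ?_ hq_le) hR'.le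
    gcongr
    linarith
  calc (#(G.indepSubsets univ) : ℝ) ≤ (∑ j ∈ range (q + 1), n.choose j : ℝ) * 2 ^ R := by
        exact_mod_cast hcount
    _ ≤ 2 ^ (6 * t ^ 8 * q) * 2 ^ (R : ℝ) := by rw [rpow_natCast]; gcongr
    _ = 2 ^ (6 * t ^ 8 * q + R) := (rpow_add two_pos _ _).symm
    _ ≤ _ := rpow_le_rpow_of_exponent_le one_le_two hexp

end SimpleGraph

/-- Alon: there is an absolute constant `C > 0` such that any finite simple
`k`-regular graph (`k ≥ 1`) on `n` vertices has at most
`2^{(1/2 + C·k^{-1/10})·n}` independent sets. -/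
theorem stmt_7 :
    ∃ C : ℝ, 0 < C ∧
      ∀ (V : Type) [Fintype V] (G : SimpleGraph V) [DecidableRel G.Adj] (k : ℕ),
        1 ≤ k → G.IsRegularOfDegree k →
        ((Finset.univ.powerset.filter
            (fun s : Finset V => ∀ x ∈ s, ∀ y ∈ s, ¬ G.Adj x y)).card : ℝ)
          ≤ 2 ^ ((1 / 2 + C * (k : ℝ) ^ (-(1 / 10) : ℝ)) * (Fintype.card V : ℝ)) := by
  refine ⟨11, by norm_num, fun V _ G _ k hk hG => ?_⟩
  classical
  rcases isEmpty_or_nonempty V with hV | hV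
  · simp
  set t : ℝ := (k : ℝ) ^ (1 / 10 : ℝ)
  have hk0 : (0 : ℝ) ≤ k := k.cast_nonneg
  have ht : 1 ≤ t := one_le_rpow (by exact_mod_cast hk) (by norm_num)
  have hkt : (k : ℝ) = t ^ 10 := by
    rw [← rpow_natCast, ← rpow_mul hk0]; norm_num
  have hkn : (k : ℝ) ≤ Fintype.card V := by
    obtain ⟨v⟩ := hV
    exact_mod_cast (hG v ▸ G.degree_lt_card_verts v).le
  rw [rpow_neg hk0]
  refine G.card_indepSubsets_univ_le ht (hkt ▸ hkn) fun B hB => ?_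
  obtain ⟨w, hw, hdeg⟩ := hG.exists_le_card_adj (inv_nonneg.mpr (by linarith)) hB
  refine ⟨w, hw, le_of_eq_of_le ?_ hdeg⟩
  change t ^ 9 = k * t⁻¹
  rw [hkt]; field_simp
end

section
/- There exists an absolute constant C > 0 with the following property: for every finite group G and every nonempty subset A ⊆ G, the number of A-free subsets of G does not exceed 2^{(1/2 + C·|A|^{−1/10})·|G|}. -/
/-!
Fix `t ≥ 1`. For an `A`-free set `S`, choose `F ⊆ S` maximising `|F A| - t |F|`. Comparing
with `∅` gives `|F| ≤ |G| / t`, and comparing with `F ∪ {v}` shows that every `v ∈ S \ F` lies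
outside `F A` while `|v A \ F A| ≤ t`. Double counting the pairs `(v, a)` with `v a ∈ F A`
bounds the number of such `v` by `(|A| + t) |G| / (2 |A|)`, so `S` is determined by a small set
`F` and a subset of a set of size about `|G| / 2`. With `t = m²` and `m ≈ |A|^{1/4}` the number
of choices of `F` is `2^{O(|G| / m)}`.
-/

open Finset Pointwise

section FreeSets

variable {G : Type} [Group G] [DecidableEq G]

lemma sum_card_smul_inter_le (A X D : Finset G) :
    ∑ v ∈ D, #(v • A ∩ X) ≤ #A * #X := by
  calc ∑ v ∈ D, #(v • A ∩ X) = ∑ v ∈ D, ∑ a ∈ A, if v * a ∈ X then 1 else 0 := by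
        refine sum_congr rfl fun v _ => ?_
        rw [← filter_mem_eq_inter, smul_finset_def, filter_image,
          card_image_of_injective _ (MulAction.injective v), card_filter]
        rfl
    _ = ∑ a ∈ A, #{v ∈ D | v * a ∈ X} := by
        rw [sum_comm]
        simp only [card_filter]
    _ ≤ ∑ _a ∈ A, #X := sum_le_sum fun a _ =>
        card_le_card_of_injOn (· * a) (fun v hv => (mem_filter.1 hv).2)
          fun _ _ _ _ h => mul_right_cancel h
    _ = #A * #X := by rw [sum_const, smul_eq_mul]

variable [Fintype G]

def freeSets (A : Finset G) : Finset (Finset G) :=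
  univ.powerset.filter fun S => ∀ s₁ ∈ S, ∀ a ∈ A, s₁ * a ∉ S

def dominated (A : Finset G) (t : ℕ) (F : Finset G) : Finset G :=
  {v | v ∉ F * A ∧ #(v • A \ (F * A)) ≤ t}

lemma exists_fingerprint (A : Finset G) (t : ℕ) {S : Finset G} (hS : S ∈ freeSets A) :
    ∃ F ⊆ S, t * #F ≤ #(F * A) ∧ S \ F ⊆ dominated A t F := by
  obtain ⟨F, hFS, hmax⟩ := S.powerset.exists_max_image
    (fun F => (#(F * A) : ℤ) - t * #F) ⟨∅, empty_mem_powerset S⟩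
  rw [mem_powerset] at hFS
  refine ⟨F, hFS, ?_, fun v hv => ?_⟩
  · have h0 := hmax ∅ (empty_mem_powerset S)
    simp only [empty_mul, card_empty, CharP.cast_eq_zero, mul_zero, sub_zero] at h0
    exact_mod_cast (by linarith : (t * #F : ℤ) ≤ #(F * A))
  obtain ⟨hvS, hvF⟩ := mem_sdiff.1 hv
  have hvFA : v ∉ F * A := by
    intro h
    obtain ⟨y, hy, a, ha, rfl⟩ := mem_mul.1 h
    exact (mem_filter.1 hS).2 y (hFS hy) a ha hvS
  have hgain := hmax (insert v F) (mem_powerset.2 (insert_subset hvS hFS))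
  rw [insert_eq, union_mul, singleton_mul, ← card_sdiff_add_card, ← insert_eq,
    card_insert_of_notMem hvF] at hgain
  push_cast at hgain
  have hsmall : (#(v • A \ (F * A)) : ℤ) ≤ t := by linarith
  exact mem_filter.2 ⟨mem_univ v, hvFA, by exact_mod_cast hsmall⟩

lemma two_mul_card_dominated_le (A : Finset G) (t : ℕ) (F : Finset G) :
    2 * #A * #(dominated A t F) ≤ (#A + t) * Fintype.card G := by
  set D := dominated A t F
  have hcover : ∀ v ∈ D, #A ≤ #(v • A ∩ (F * A)) + t := fun v hv => by
    have := card_inter_add_card_sdiff (v • A) (F * A)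
    rw [card_smul_finset] at this
    have := (mem_filter.1 hv).2.2
    omega
  have hsum : #D * #A ≤ #A * #(F * A) + #D * t := by
    calc #D * #A ≤ ∑ v ∈ D, (#(v • A ∩ (F * A)) + t) := by
          simpa only [smul_eq_mul] using card_nsmul_le_sum _ _ _ hcover
      _ ≤ #A * #(F * A) + #D * t := by
          rw [sum_add_distrib, sum_const, smul_eq_mul]
          exact Nat.add_le_add_right (sum_card_smul_inter_le A _ D) _
  have hdisj : #D + #(F * A) ≤ Fintype.card G := by
    rw [← card_union_of_disjoint (disjoint_left.2 fun v hv => (mem_filter.1 hv).2.1)]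
    exact card_le_univ _
  nlinarith

lemma card_freeSets_le (A : Finset G) (hA : A.Nonempty) {t : ℕ} (ht : 0 < t) :
    #(freeSets A) ≤ (∑ j ∈ range (Fintype.card G / t + 1), (Fintype.card G).choose j) *
      2 ^ ((#A + t) * Fintype.card G / (2 * #A)) := by
  set n := Fintype.card G
  set small := (range (n / t + 1)).biUnion fun j => powersetCard j (univ : Finset G)
  have hcover : freeSets A ⊆
      small.biUnion fun F => (dominated A t F).powerset.image (F ∪ ·) := by
    intro S hS
    obtain ⟨F, hFS, hFA, hSF⟩ := exists_fingerprint A t hS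
    have hF : #F ≤ n / t :=
      (Nat.le_div_iff_mul_le ht).2 (by rw [mul_comm]; exact hFA.trans (card_le_univ _))
    simp only [small, mem_biUnion, mem_range, mem_powersetCard, mem_image, mem_powerset]
    exact ⟨F, ⟨#F, by omega, subset_univ F, rfl⟩, S \ F, hSF, union_sdiff_of_subset hFS⟩
  have hdom (F : Finset G) : #(dominated A t F) ≤ (#A + t) * n / (2 * #A) :=
    (Nat.le_div_iff_mul_le (by have := hA.card_pos; omega)).2
      (by linarith [two_mul_card_dominated_le A t F])
  calc #(freeSets A)
      ≤ ∑ F ∈ small, #((dominated A t F).powerset.image (F ∪ ·)) :=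
        (card_le_card hcover).trans card_biUnion_le
    _ ≤ ∑ _F ∈ small, 2 ^ ((#A + t) * n / (2 * #A)) := sum_le_sum fun F _ =>
        card_image_le.trans (by rw [card_powerset]; exact Nat.pow_le_pow_right two_pos (hdom F))
    _ ≤ _ := by
        rw [sum_const, smul_eq_mul]
        gcongr
        exact card_biUnion_le.trans (by simp [n, card_powersetCard])

end FreeSets

lemma sum_range_choose_mul_pow_le {x : ℝ} (hx0 : 0 ≤ x) (hx1 : x ≤ 1) {s n : ℕ}
    (hs : s ≤ n) :
    (∑ j ∈ range (s + 1), (n.choose j : ℝ)) * x ^ s ≤ (1 + x) ^ n := by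
  rw [sum_mul, add_comm 1 x, add_pow]
  calc ∑ j ∈ range (s + 1), (n.choose j : ℝ) * x ^ s
      ≤ ∑ j ∈ range (s + 1), x ^ j * 1 ^ (n - j) * n.choose j :=
        sum_le_sum fun j hj => by
          rw [one_pow, mul_one, mul_comm (x ^ j)]
          exact mul_le_mul_of_nonneg_left
            (pow_le_pow_of_le_one hx0 hx1 (Nat.lt_succ_iff.1 (mem_range.1 hj))) (by positivity)
    _ ≤ ∑ j ∈ range (n + 1), x ^ j * 1 ^ (n - j) * n.choose j :=
        sum_le_sum_of_subset_of_nonneg (range_subset_range.2 (by omega))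
          fun _ _ _ => by positivity

lemma one_add_le_two_rpow {x : ℝ} (hx : 0 ≤ x) : 1 + x ≤ 2 ^ (2 * x) := by
  rw [Real.rpow_def_of_pos two_pos, add_comm]
  refine (Real.add_one_le_exp x).trans (Real.exp_le_exp.2 ?_)
  nlinarith [Real.log_two_gt_d9]

lemma sum_range_choose_le_two_rpow {m : ℕ} (hm : 0 < m) (n : ℕ) :
    ∑ j ∈ range (n / m ^ 2 + 1), (n.choose j : ℝ) ≤ 2 ^ (4 * n / m : ℝ) := by
  set s := n / m ^ 2
  have hM : (1 : ℝ) ≤ m := by exact_mod_cast hm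
  have hx0 : (0 : ℝ) ≤ 1 / m ^ 2 := by positivity
  have hx1 : 1 / (m : ℝ) ^ 2 ≤ 1 := by rw [div_le_one (by positivity)]; nlinarith
  have hms : (m : ℝ) ^ 2 * s ≤ n := by exact_mod_cast Nat.mul_div_le n (m ^ 2)
  have hbinom : (1 + 1 / (m : ℝ) ^ 2) ^ n ≤ 2 ^ (2 * n / m ^ 2 : ℝ) := by
    calc (1 + 1 / (m : ℝ) ^ 2) ^ n ≤ ((2 : ℝ) ^ (2 * (1 / (m : ℝ) ^ 2))) ^ n := by
          gcongr; exact one_add_le_two_rpow hx0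
      _ = 2 ^ (2 * n / m ^ 2 : ℝ) := by
          rw [← Real.rpow_mul_natCast zero_le_two]; ring_nf
  have hpow : ((m : ℝ) ^ 2) ^ s ≤ 2 ^ (2 * m * s : ℝ) := by
    have : m ^ (2 * s) ≤ 2 ^ (2 * m * s) :=
      calc m ^ (2 * s) ≤ (2 ^ m) ^ (2 * s) := Nat.pow_le_pow_left Nat.lt_two_pow_self.le _
        _ = 2 ^ (2 * m * s) := by rw [← pow_mul]; ring_nf
    rw [← pow_mul]
    exact_mod_cast this
  calc ∑ j ∈ range (s + 1), (n.choose j : ℝ)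
      = (∑ j ∈ range (s + 1), (n.choose j : ℝ)) * (1 / (m : ℝ) ^ 2) ^ s *
          ((m : ℝ) ^ 2) ^ s := by
        rw [mul_assoc, ← mul_pow, one_div_mul_cancel (by positivity), one_pow, mul_one]
    _ ≤ 2 ^ (2 * n / m ^ 2 : ℝ) * 2 ^ (2 * m * s : ℝ) := by
        gcongr
        exact (sum_range_choose_mul_pow_le hx0 hx1 (Nat.div_le_self n _)).trans hbinom
    _ ≤ 2 ^ (4 * n / m : ℝ) := by
        rw [← Real.rpow_add two_pos]
        refine Real.rpow_le_rpow_of_exponent_le one_le_two ?_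
        rw [div_add' _ _ _ (by positivity), div_le_div_iff₀ (by positivity) (by positivity)]
        nlinarith [mul_le_mul_of_nonneg_left hms (by positivity : (0 : ℝ) ≤ 2 * m),
          mul_nonneg (mul_nonneg (Nat.cast_nonneg n) (by linarith : (0 : ℝ) ≤ m - 1))
            (by positivity : (0 : ℝ) ≤ m)]

lemma exists_pow_four_le_le_two_mul_pow_four {k : ℕ} (hk : 0 < k) :
    ∃ m, 0 < m ∧ m ^ 4 ≤ k ∧ k ≤ (2 * m) ^ 4 := by
  refine ⟨k.sqrt.sqrt, Nat.sqrt_pos.2 (Nat.sqrt_pos.2 hk), ?_, ?_⟩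
  · calc k.sqrt.sqrt ^ 4 = (k.sqrt.sqrt ^ 2) ^ 2 := by ring
      _ ≤ k.sqrt ^ 2 := Nat.pow_le_pow_left (Nat.sqrt_le' _) 2
      _ ≤ k := Nat.sqrt_le' k
  · have h1 := Nat.lt_succ_sqrt' k
    have h2 := Nat.lt_succ_sqrt' k.sqrt
    have hm := Nat.sqrt_pos.2 (Nat.sqrt_pos.2 hk)
    calc k ≤ (k.sqrt + 1) ^ 2 := h1.le
      _ ≤ ((k.sqrt.sqrt + 1) ^ 2) ^ 2 := Nat.pow_le_pow_left h2 2
      _ ≤ (2 * k.sqrt.sqrt) ^ 4 := by rw [← pow_mul]; exact Nat.pow_le_pow_left (by omega) 4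

lemma exponent_le_half_add_rpow_neg {K N M : ℝ} (hN : 0 ≤ N) (hM : 1 ≤ M) (hMK : M ^ 4 ≤ K)
    (hKM : K ≤ (2 * M) ^ 4) :
    4 * N / M + (K + M ^ 2) * N / (2 * K) ≤ (1 / 2 + 9 * K ^ (-(1 / 10) : ℝ)) * N := by
  have hK : 0 < K := lt_of_lt_of_le (by positivity) hMK
  have hroot : K ^ (1 / 10 : ℝ) ≤ 2 * M := by
    calc K ^ (1 / 10 : ℝ) ≤ ((2 * M) ^ 10) ^ ((10 : ℕ)⁻¹ : ℝ) := by
          norm_num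
          gcongr
          exact hKM.trans (pow_le_pow_right₀ (by linarith) (by norm_num))
      _ = 2 * M := Real.pow_rpow_inv_natCast (by positivity) (by norm_num)
  have hinv : 1 / M ≤ 2 * K ^ (-(1 / 10) : ℝ) := by
    rw [Real.rpow_neg hK.le, div_le_iff₀ (by positivity)]
    have := Real.rpow_pos_of_pos hK (1 / 10)
    field_simp
    nlinarith
  have hsq : M ^ 2 / K ≤ 1 / M := by
    rw [div_le_div_iff₀ hK (by positivity)]
    nlinarith
  calc 4 * N / M + (K + M ^ 2) * N / (2 * K)
      = N / 2 + (4 * (1 / M) + M ^ 2 / K / 2) * N := by field_simp; ring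
    _ ≤ N / 2 + (4 * (1 / M) + 1 / M / 2) * N := by gcongr
    _ ≤ N / 2 + (9 * K ^ (-(1 / 10) : ℝ)) * N := by gcongr; linarith
    _ = (1 / 2 + 9 * K ^ (-(1 / 10) : ℝ)) * N := by ring

/-- Alon: there is an absolute constant `C > 0` such that for every finite group `G`
and every nonempty `A ⊆ G`, the number of `A`-free subsets of `G` is at most
`2^{(1/2 + C·|A|^{-1/10})·|G|}`. -/
theorem stmt_8 :
    ∃ C : ℝ, 0 < C ∧
      ∀ (G : Type) [Group G] [Fintype G] [DecidableEq G] (A : Finset G),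
        A.Nonempty →
        ((Finset.univ.powerset.filter
            (fun S : Finset G => ∀ s₁ ∈ S, ∀ a ∈ A, s₁ * a ∉ S)).card : ℝ)
          ≤ 2 ^ ((1 / 2 + C * (A.card : ℝ) ^ (-(1 / 10) : ℝ)) * (Fintype.card G : ℝ)) := by
  refine ⟨9, by norm_num, fun G _ _ _ A hA => ?_⟩
  obtain ⟨m, hm, hmA, hAm⟩ := exists_pow_four_le_le_two_mul_pow_four hA.card_pos
  set n := Fintype.card G
  calc (#(freeSets A) : ℝ)
      ≤ (∑ j ∈ range (n / m ^ 2 + 1), (n.choose j : ℝ)) *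
          2 ^ (((#A + m ^ 2) * n / (2 * #A) : ℕ) : ℝ) := by
        rw [Real.rpow_natCast]
        exact_mod_cast card_freeSets_le A hA (pow_pos hm 2)
    _ ≤ 2 ^ (4 * n / m : ℝ) * 2 ^ ((#A + m ^ 2 : ℝ) * n / (2 * #A)) := by
        gcongr
        · exact sum_range_choose_le_two_rpow hm n
        · exact one_le_two
        · exact_mod_cast Nat.cast_div_le
    _ = 2 ^ (4 * n / m + (#A + m ^ 2 : ℝ) * n / (2 * #A)) := (Real.rpow_add two_pos _ _).symm
    _ ≤ _ := Real.rpow_le_rpow_of_exponent_le one_le_two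
        (exponent_le_half_add_rpow_neg (Nat.cast_nonneg n) (by exact_mod_cast hm)
          (by exact_mod_cast hmA) (by exact_mod_cast hAm))
end

section
/- Let G be a finite additive abelian group of order n and let S be a sum-free subset of G. Then 2·|S| ≤ n; moreover, 2·|S| = n if and only if the complement G \ S is a subgroup H of G of index 2 and S is the nontrivial coset of H (i.e., S = H + g for some g ∉ H). -/
open scoped Classical Pointwise

/-- A sum-free subset `S` of a finite abelian group `G` of order `n` satisfies
`2|S| ≤ n`, with equality iff `G \ S` is a subgroup `H` of index 2 and `S` is the
nontrivial coset `H + g` for some `g ∉ H`. -/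
theorem stmt_14 {G : Type*} [AddCommGroup G] [Fintype G] (S : Finset G)
    (hS : ∀ x ∈ S, ∀ y ∈ S, x + y ∉ S) :
    2 * S.card ≤ Fintype.card G ∧
      (2 * S.card = Fintype.card G ↔
        ∃ H : AddSubgroup G, H.index = 2 ∧ (S : Set G)ᶜ = (H : Set G) ∧
          ∃ g ∉ H, (S : Set G) = (fun h => h + g) '' (H : Set G)) := by
  classical
  have key : ∀ a ∈ S, Disjoint S (a +ᵥ S) := by
    intro a ha
    rw [Finset.disjoint_left]
    intro x hx hx'
    rw [Finset.mem_vadd_finset] at hx'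
    obtain ⟨y, hy, hxy⟩ := hx'
    rw [← hxy] at hx
    exact hS a ha y hy hx
  have h1 : ∀ a ∈ S, 2 * S.card ≤ Fintype.card G := by
    intro a ha
    have hd := key a ha
    calc 2 * S.card = S.card + (a +ᵥ S).card := by
          rw [Finset.card_vadd_finset]; ring
      _ = (S ∪ (a +ᵥ S)).card := (Finset.card_union_of_disjoint hd).symm
      _ ≤ Fintype.card G := by
          simpa using Finset.card_le_univ (S ∪ (a +ᵥ S))
  have hle : 2 * S.card ≤ Fintype.card G := by
    rcases S.eq_empty_or_nonempty with rfl | ⟨a, ha⟩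
    · simp
    · exact h1 a ha
  refine ⟨hle, ?_, ?_⟩
  · -- equality → structure
    intro heq
    have hpos : 0 < Fintype.card G := Fintype.card_pos
    have hSne : S.Nonempty := by
      rw [← Finset.card_pos]; omega
    obtain ⟨a, ha⟩ := hSne
    have hcompl : ∀ b ∈ S, b +ᵥ S = Sᶜ := by
      intro b hb
      have hu : S ∪ (b +ᵥ S) = Finset.univ := by
        apply Finset.eq_univ_of_card
        rw [Finset.card_union_of_disjoint (key b hb), Finset.card_vadd_finset]
        omega
      ext x
      simp only [Finset.mem_compl]
      constructor
      · intro hx hxS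
        exact Finset.disjoint_left.mp (key b hb) hxS hx
      · intro hx
        have hmem := Finset.mem_univ x
        rw [← hu, Finset.mem_union] at hmem
        tauto
    set H : AddSubgroup G := AddAction.stabilizer G S with hH
    have hsub : ∀ b ∈ S, ∀ c ∈ S, b - c ∈ H := by
      intro b hb c hc
      have hbc : b +ᵥ S = c +ᵥ S := by rw [hcompl b hb, hcompl c hc]
      have : (-c) +ᵥ (b +ᵥ S) = (-c) +ᵥ (c +ᵥ S) := by rw [hbc]
      rw [vadd_vadd, vadd_vadd, neg_add_cancel, zero_vadd] at this
      show (b - c) +ᵥ S = S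
      rw [sub_eq_neg_add]
      exact this
    have hHS : ∀ h ∈ H, h + a ∈ S := by
      intro h hh
      have hmem : h + a ∈ h +ᵥ S := Finset.mem_vadd_finset.mpr ⟨a, ha, rfl⟩
      rwa [show h +ᵥ S = S from hh] at hmem
    have hSH : ∀ x ∈ S, x - a ∈ H := fun x hx => hsub x hx a ha
    have haH : a ∉ H := by
      intro hmem
      exact hS a ha a ha (hHS a hmem)
    have hSset : (S : Set G) = (fun h => h + a) '' (H : Set G) := by
      ext x
      simp only [Set.mem_image, Finset.mem_coe, SetLike.mem_coe]
      constructor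
      · intro hx
        exact ⟨x - a, hSH x hx, by abel⟩
      · rintro ⟨h, hh, rfl⟩
        exact hHS h hh
    -- disjointness of S and H
    have hdisj : ∀ x ∈ S, x ∉ H := by
      intro x hx hxH
      have : x - (x - a) ∈ H := AddSubgroup.sub_mem H hxH (hSH x hx)
      simp only [sub_sub_cancel] at this
      exact haH this
    -- finset version of H
    set Hf : Finset G := Finset.univ.filter (· ∈ H) with hHf
    have hHfmem : ∀ x, x ∈ Hf ↔ x ∈ H := by
      intro x; simp [hHf]
    have himg : S = Hf.image (· + a) := by
      ext x
      simp only [Finset.mem_image, hHfmem]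
      constructor
      · intro hx
        exact ⟨x - a, hSH x hx, by abel⟩
      · rintro ⟨h, hh, rfl⟩
        exact hHS h hh
    have hcard : Hf.card = S.card := by
      rw [himg, Finset.card_image_of_injective _ (add_left_injective a)]
    have hdisj2 : Disjoint S Hf := by
      rw [Finset.disjoint_left]
      intro x hx hx'
      exact hdisj x hx ((hHfmem x).mp hx')
    have huniv : S ∪ Hf = Finset.univ := by
      apply Finset.eq_univ_of_card
      rw [Finset.card_union_of_disjoint hdisj2, hcard]
      omega
    have hcompset : (S : Set G)ᶜ = (H : Set G) := by
      ext x
      simp only [Set.mem_compl_iff, Finset.mem_coe, SetLike.mem_coe]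
      constructor
      · intro hx
        have hmem := Finset.mem_univ x
        rw [← huniv, Finset.mem_union] at hmem
        rcases hmem with h | h
        · exact absurd h hx
        · exact (hHfmem x).mp h
      · intro hx hxS
        exact hdisj x hxS hx
    have hcardH : Nat.card H = S.card := by
      rw [Nat.card_eq_fintype_card, Fintype.card_subtype, ← hcard]
    have hidx : H.index = 2 := by
      have := AddSubgroup.index_mul_card H
      rw [hcardH, Nat.card_eq_fintype_card] at this
      have hSpos : 0 < S.card := Finset.card_pos.mpr ⟨a, ha⟩
      have : H.index * S.card = 2 * S.card := by omega
      exact Nat.eq_of_mul_eq_mul_right hSpos this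
    exact ⟨H, hidx, hcompset, a, haH, hSset⟩
  · -- structure → equality
    rintro ⟨H, hidx, hcomp, g, hg, hSimg⟩
    have hmul := AddSubgroup.index_mul_card H
    rw [hidx, Nat.card_eq_fintype_card] at hmul
    have hfe : Finset.univ.filter (· ∈ H) = Sᶜ := by
      ext x
      have hx := Set.ext_iff.mp hcomp x
      simp only [Set.mem_compl_iff, Finset.mem_coe, SetLike.mem_coe] at hx
      simp [Finset.mem_compl, ← hx]
    have hcardH : Fintype.card H = Fintype.card G - S.card := by
      rw [Fintype.card_subtype, hfe, Finset.card_compl]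
    rw [Nat.card_eq_fintype_card, hcardH] at hmul
    have hle2 : S.card ≤ Fintype.card G := Finset.card_le_univ S
    omega
end

section
/- For every positive integer n, the number of maximal sum-free subsets of the integer interval [1, n] is at least 2^{⌊n/4⌋}. -/
open Finset

/-- Every sum-free subset of `[1,n]` extends to a maximal one. -/
private lemma ext_max (n : ℕ) (S : Finset ℤ) (hS : S ⊆ Finset.Icc 1 (n : ℤ))
    (hsf : ∀ x ∈ S, ∀ y ∈ S, x + y ∉ S) :
    ∃ M ∈ (Finset.Icc (1 : ℤ) n).powerset.filter
        (fun S => (∀ x ∈ S, ∀ y ∈ S, x + y ∉ S) ∧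
          ∀ T ∈ (Finset.Icc (1 : ℤ) n).powerset,
            (∀ x ∈ T, ∀ y ∈ T, x + y ∉ T) → S ⊆ T → S = T), S ⊆ M := by
  classical
  set 𝒯 := (Finset.Icc (1 : ℤ) n).powerset.filter
      (fun T => (∀ x ∈ T, ∀ y ∈ T, x + y ∉ T) ∧ S ⊆ T) with h𝒯
  have hne : 𝒯.Nonempty := ⟨S, by
    simp only [h𝒯, mem_filter, mem_powerset]
    exact ⟨hS, hsf, Finset.Subset.refl S⟩⟩
  obtain ⟨M, hM, hmax⟩ := Finset.exists_max_image 𝒯 Finset.card hne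
  simp only [h𝒯, mem_filter, mem_powerset] at hM
  refine ⟨M, ?_, hM.2.2⟩
  simp only [mem_filter, mem_powerset]
  refine ⟨hM.1, hM.2.1, ?_⟩
  intro T hT hTsf hMT
  have hTmem : T ∈ 𝒯 := by
    simp only [h𝒯, mem_filter, mem_powerset]
    exact ⟨hT, hTsf, hM.2.2.trans hMT⟩
  exact Finset.eq_of_subset_of_card_le hMT (hmax T hTmem)

/-- Cameron–Erdős: the number of maximal sum-free subsets of `[1, n]` is at least
`2^{⌊n/4⌋}`. -/
theorem stmt_17 (n : ℕ) (hn : 0 < n) :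
    2 ^ (n / 4) ≤
      ((Finset.Icc (1 : ℤ) n).powerset.filter
        (fun S => (∀ x ∈ S, ∀ y ∈ S, x + y ∉ S) ∧
          ∀ T ∈ (Finset.Icc (1 : ℤ) n).powerset,
            (∀ x ∈ T, ∀ y ∈ T, x + y ∉ T) → S ⊆ T → S = T)).card := by
  classical
  by_cases hq0 : n / 4 = 0
  · rw [hq0, pow_zero]
    obtain ⟨M, hM, -⟩ := ext_max n ∅ (by simp) (by simp)
    exact Finset.card_pos.2 ⟨M, hM⟩
  · have hq1 : 1 ≤ n / 4 := Nat.one_le_iff_ne_zero.2 hq0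
    set q := n / 4 with hqdef
    set m : ℤ := 2 * ((n : ℤ) / 2) with hmdef
    have hmn : m ≤ (n : ℤ) := by omega
    have hm4 : 4 * (q : ℤ) ≤ m := by omega
    set SA : Finset ℕ → Finset ℤ := fun A =>
      insert m ((A.image (fun i : ℕ => 2 * (i : ℤ) + 1)) ∪
        ((Finset.range q \ A).image (fun i : ℕ => m - (2 * (i : ℤ) + 1)))) with hSA
    have hmemSA : ∀ A : Finset ℕ, A ⊆ Finset.range q → ∀ z ∈ SA A,
        z = m ∨ ∃ i : ℕ, i < q ∧
          ((i ∈ A ∧ z = 2 * (i : ℤ) + 1) ∨ (i ∉ A ∧ z = m - (2 * (i : ℤ) + 1))) := by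
      intro A hA z hz
      rcases mem_insert.1 hz with h | hz'
      · exact Or.inl h
      rcases mem_union.1 hz' with h' | h'
      · obtain ⟨i, hi, rfl⟩ := mem_image.1 h'
        exact Or.inr ⟨i, mem_range.1 (hA hi), Or.inl ⟨hi, rfl⟩⟩
      · obtain ⟨i, hi, rfl⟩ := mem_image.1 h'
        obtain ⟨hi1, hi2⟩ := mem_sdiff.1 hi
        exact Or.inr ⟨i, mem_range.1 hi1, Or.inr ⟨hi2, rfl⟩⟩
    have hsub : ∀ A : Finset ℕ, A ⊆ Finset.range q → SA A ⊆ Finset.Icc (1 : ℤ) n := by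
      intro A hA z hz
      rcases hmemSA A hA z hz with rfl | ⟨i, hi, ⟨-, rfl⟩ | ⟨-, rfl⟩⟩ <;>
        · rw [Finset.mem_Icc]; omega
    have hsf : ∀ A : Finset ℕ, A ⊆ Finset.range q →
        ∀ x ∈ SA A, ∀ y ∈ SA A, x + y ∉ SA A := by
      intro A hA x hx y hy hxy
      rcases hmemSA A hA x hx with rfl | ⟨i, hi, ⟨hiA, rfl⟩ | ⟨hiA, rfl⟩⟩ <;>
        rcases hmemSA A hA y hy with rfl | ⟨j, hj, ⟨hjA, rfl⟩ | ⟨hjA, rfl⟩⟩ <;>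
        rcases hmemSA A hA _ hxy with h | ⟨k, hk, ⟨hkA, h⟩ | ⟨hkA, h⟩⟩ <;>
        first
          | omega
          | (have hij : i = j := by omega
             subst hij
             tauto)
    have key : ∀ A : Finset ℕ, A ∈ (Finset.range q).powerset →
        ∃ M ∈ (Finset.Icc (1 : ℤ) n).powerset.filter
          (fun S => (∀ x ∈ S, ∀ y ∈ S, x + y ∉ S) ∧
            ∀ T ∈ (Finset.Icc (1 : ℤ) n).powerset,
              (∀ x ∈ T, ∀ y ∈ T, x + y ∉ T) → S ⊆ T → S = T), SA A ⊆ M := by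
      intro A hA
      exact ext_max n (SA A) (hsub A (mem_powerset.1 hA)) (hsf A (mem_powerset.1 hA))
    choose! f hf1 hf2 using key
    have hinj : ∀ A ∈ (Finset.range q).powerset, ∀ B ∈ (Finset.range q).powerset,
        f A = f B → A ⊆ B := by
      intro A hA B hB hfe i hiA
      by_contra hiB
      have hiq : i < q := mem_range.1 (mem_powerset.1 hA hiA)
      have h1 : (2 * (i : ℤ) + 1) ∈ f A :=
        hf2 A hA (mem_insert_of_mem (mem_union_left _ (mem_image_of_mem _ hiA)))
      have h2 : m - (2 * (i : ℤ) + 1) ∈ f A := by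
        rw [hfe]
        exact hf2 B hB (mem_insert_of_mem (mem_union_right _
          (mem_image_of_mem _ (mem_sdiff.2 ⟨mem_range.2 hiq, hiB⟩))))
      have h3 : m ∈ f A := hf2 A hA (mem_insert_self _ _)
      have hsfA := (mem_filter.1 (hf1 A hA)).2.1
      exact hsfA _ h1 _ h2
        (by rw [show (2 * (i : ℤ) + 1) + (m - (2 * (i : ℤ) + 1)) = m by ring]; exact h3)
    calc 2 ^ q = ((Finset.range q).powerset).card := by
          rw [Finset.card_powerset, Finset.card_range]
      _ ≤ _ := Finset.card_le_card_of_injOn f (fun A hA => hf1 A hA)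
          (fun A hA B hB hfe => Finset.Subset.antisymm
            (hinj A (Finset.mem_coe.1 hA) B (Finset.mem_coe.1 hB) hfe)
            (hinj B (Finset.mem_coe.1 hB) A (Finset.mem_coe.1 hA) hfe.symm))
end

section
/- Let G be a finite group (written multiplicatively) and let S ⊆ G be a maximal product-free set with |S| = 1. Then G is isomorphic to the cyclic group of order 2, the cyclic group of order 3, the cyclic group of order 4, or the quaternion group Q₈ of order 8, and the unique element of S has prime order in G. -/
/-!
Maximality of `S = {a}` says that `{x, a}` fails to be product-free for every `x ≠ a`, i.e. every
element of `G` is `1`, `a`, `a²` or a square root of `a`. If `a² ≠ 1` a square root of `a` can only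
be `a²`, and then `G = ⟨a⟩` with `a³ = 1`. If `a² = 1`, either `G = {1, a}`, or a square root `i`
of `a` has order `4`, and if `G ≠ ⟨i⟩` then every `z ∉ ⟨i⟩` squares to `a` and (as `i z ∉ ⟨i⟩`
squares to `a` too) inverts `i` by conjugation. Hence the centraliser of `i` is `⟨i⟩`, and for a
fixed `y ∉ ⟨i⟩` every `z ∉ ⟨i⟩` has `y⁻¹ z` in it: `G = ⟨i⟩ ∪ y⟨i⟩` with the relations of `Q₈`.
-/

open Subgroup

section ZModPow

variable {G : Type*} [Group G] {m : ℕ} {i : G}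

/-- `i ^ k` for an exponent `k : ZMod m`; only meaningful when `i ^ m = 1`. -/
def zmodPow (i : G) (k : ZMod m) : G := i ^ (k.cast : ℤ)

lemma zmodPow_intCast (hi : i ^ m = 1) (z : ℤ) : zmodPow i (z : ZMod m) = i ^ z := by
  rw [zmodPow, ZMod.coe_intCast, zpow_eq_zpow_iff_modEq]
  exact (Int.mod_modEq z m).of_dvd (Int.natCast_dvd_natCast.mpr (orderOf_dvd_of_pow_eq_one hi))

lemma zmodPow_eq_one_iff (hi : orderOf i = m) {k : ZMod m} : zmodPow i k = 1 ↔ k = 0 := by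
  rw [zmodPow, ← orderOf_dvd_iff_zpow_eq_one, hi, ← ZMod.intCast_zmod_eq_zero_iff_dvd,
    ZMod.intCast_zmod_cast]

lemma zmodPow_mem_zpowers (k : ZMod m) : zmodPow i k ∈ zpowers i := zpow_mem_zpowers i _

end ZModPow

lemma Commute.inv_mul_of_mul_eq_mul_inv {G : Type*} [Group G] {i y z : G}
    (hy : i * y = y * i⁻¹) (hz : i * z = z * i⁻¹) : Commute i (y⁻¹ * z) :=
  calc i * (y⁻¹ * z) = y⁻¹ * i⁻¹ * (i * y) * i * y⁻¹ * z := by group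
    _ = y⁻¹ * i⁻¹ * (z * i⁻¹) * i := by rw [hy]; group
    _ = y⁻¹ * z * i := by rw [← hz]; group

lemma zpow_mul_eq_mul_zpow_neg {G : Type*} [Group G] {i y : G} (hiy : i * y = y * i⁻¹) (z : ℤ) :
    i ^ z * y = y * i ^ (-z) := by
  have : SemiconjBy y i⁻¹ i := hiy.symm
  simpa [SemiconjBy, zpow_neg] using (this.zpow_right z).symm

namespace QuaternionGroup

variable {G : Type*} [Group G] {n : ℕ} {i y : G}

def lift (hi : i ^ (2 * n) = 1) (hy : y * y = i ^ n) (hiy : i * y = y * i⁻¹) :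
    QuaternionGroup n →* G where
  toFun
    | a k => zmodPow i k
    | xa k => y * zmodPow i k
  map_one' := by
    rw [one_def]
    simpa using zmodPow_intCast hi 0
  map_mul' q r := by
    have hn : ((n : ℤ) : ZMod (2 * n)) = n := Int.cast_natCast n
    rcases q with j | j <;> rcases r with k | k <;>
      obtain ⟨j, rfl⟩ := ZMod.intCast_surjective j <;>
      obtain ⟨k, rfl⟩ := ZMod.intCast_surjective k <;>
      simp only [a_mul_a, a_mul_xa, xa_mul_a, xa_mul_xa, ← hn, ← Int.cast_add, ← Int.cast_sub,
        zmodPow_intCast hi]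
    · rw [zpow_add]
    · rw [← mul_assoc, zpow_mul_eq_mul_zpow_neg hiy, mul_assoc, ← zpow_add, neg_add_eq_sub]
    · rw [mul_assoc, zpow_add]
    · rw [mul_assoc, ← mul_assoc (i ^ j), zpow_mul_eq_mul_zpow_neg hiy, ← mul_assoc,
        ← mul_assoc, hy, mul_assoc, ← zpow_natCast, ← zpow_add, ← zpow_add]
      congr 1; ring

theorem nonempty_mulEquiv_of_orderOf_eq (hi : orderOf i = 2 * n) (hy : y * y = i ^ n)
    (hiy : i * y = y * i⁻¹) (hyi : y ∉ zpowers i)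
    (hG : ∀ z, z ∈ zpowers i ∨ y⁻¹ * z ∈ zpowers i) : Nonempty (QuaternionGroup n ≃* G) := by
  let f := lift (hi ▸ pow_orderOf_eq_one i) hy hiy
  have hinj : Function.Injective f := by
    rw [injective_iff_map_eq_one]
    rintro (k | k) hk
    · rw [(zmodPow_eq_one_iff hi).mp hk, a_zero]
    · exact absurd (mul_eq_one_iff_eq_inv.mp hk ▸ inv_mem (zmodPow_mem_zpowers k)) hyi
  have hsurj : Function.Surjective f := by
    intro z
    rcases hG z with hz | hz <;> obtain ⟨t, ht⟩ := mem_zpowers_iff.mp hz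
    · exact ⟨a t, (zmodPow_intCast (hi ▸ pow_orderOf_eq_one i) t).trans ht⟩
    · refine ⟨xa t, ?_⟩
      change y * zmodPow i _ = z
      rw [zmodPow_intCast (hi ▸ pow_orderOf_eq_one i) t, ht, mul_inv_cancel_left]
  exact ⟨MulEquiv.ofBijective f ⟨hinj, hsurj⟩⟩

end QuaternionGroup

section ProductFree

variable {G : Type*} [Group G]

def IsProductFree (S : Finset G) : Prop := ∀ x ∈ S, ∀ y ∈ S, x * y ∉ S

theorem eq_one_or_eq_or_eq_mul_self_or_mul_self_eq_of_maximal {a : G}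
    (hmax : ∀ T : Finset G, IsProductFree T → {a} ⊆ T → {a} = T) (ha : a ≠ 1) (x : G) :
    x = 1 ∨ x = a ∨ x = a * a ∨ x * x = a := by
  classical
  by_contra! hx
  obtain ⟨hx1, hxa, hxaa, hxx⟩ := hx
  have hfree : IsProductFree {x, a} := by
    simp [IsProductFree, hx1, ha, hxx, Ne.symm hxaa]
  have hxS : x ∈ ({a} : Finset G) := by
    rw [hmax {x, a} hfree (by simp)]
    exact Finset.mem_insert_self x {a}
  exact hxa (Finset.mem_singleton.mp hxS)

end ProductFree

section SquareRoots

variable {G : Type*} [Group G] {a : G}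

theorem nonempty_mulEquiv_zmod_of_forall_mem_zpowers {g : G} (hg : ∀ x, x ∈ zpowers g) {n : ℕ}
    (hn : orderOf g = n) : Nonempty (G ≃* Multiplicative (ZMod n)) :=
  ⟨(zmodMulEquivOfGenerator hg (hn ▸ orderOf_eq_card_of_forall_mem_zpowers hg).symm).symm⟩

section MulSelfNeOne

variable (hG : ∀ x : G, x = 1 ∨ x = a ∨ x = a * a ∨ x * x = a) (haa : a * a ≠ 1)
include hG haa

theorem eq_one_or_eq_or_eq_mul_self_of_mul_self_ne_one (x : G) : x = 1 ∨ x = a ∨ x = a * a := by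
  rcases hG x with h | h | h | hx
  · exact .inl h
  · exact .inr (.inl h)
  · exact .inr (.inr h)
  rcases hG (x * a) with h | h | h | h
  · have hxa : x = a⁻¹ := eq_inv_of_mul_eq_one_left h
    refine .inr (.inr ?_)
    calc x = x * (x * x) * x⁻¹ * x⁻¹ := by group
      _ = a * a := by rw [hx, hxa, inv_inv]; group
  · exact .inl (mul_eq_right.mp h)
  · exact .inr (.inl (mul_right_cancel h))
  · have hcube : (x * a) * (x * a) = a * a * a := by simp only [← hx, mul_assoc]
    exact absurd (mul_eq_right.mp (hcube.symm.trans h)) haa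

theorem orderOf_eq_three_of_mul_self_ne_one (ha : a ≠ 1) : orderOf a = 3 := by
  have : Fact (Nat.Prime 3) := ⟨Nat.prime_three⟩
  refine orderOf_eq_prime ?_ ha
  rcases eq_one_or_eq_or_eq_mul_self_of_mul_self_ne_one hG haa (a * a * a) with h | h | h
  · rw [pow_succ, sq, h]
  · exact absurd (mul_eq_right.mp h) haa
  · exact absurd (mul_eq_left.mp h) ha

theorem nonempty_mulEquiv_zmod_three_of_mul_self_ne_one (ha : a ≠ 1) :
    Nonempty (G ≃* Multiplicative (ZMod 3)) := by
  refine nonempty_mulEquiv_zmod_of_forall_mem_zpowers (fun x ↦ ?_)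
    (orderOf_eq_three_of_mul_self_ne_one hG haa ha)
  rcases eq_one_or_eq_or_eq_mul_self_of_mul_self_ne_one hG haa x with h | h | h <;> rw [h]
  · exact one_mem _
  · exact mem_zpowers a
  · exact mul_mem (mem_zpowers a) (mem_zpowers a)

end MulSelfNeOne

theorem orderOf_eq_four_of_mul_self_eq {i : G} (hi : i * i = a) (ha : a ≠ 1) (haa : a * a = 1) :
    orderOf i = 4 :=
  orderOf_eq_prime_pow (p := 2) (n := 1) (by rwa [pow_one, sq, hi])
    (by rw [show 2 ^ (1 + 1) = 2 * 2 from rfl, pow_mul, sq i, hi, sq, haa])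

section MulSelfEqOne

variable (hG : ∀ x : G, x = 1 ∨ x = a ∨ x * x = a) {i : G} (hi : i * i = a)
include hG hi

theorem mul_self_eq_of_not_mem_zpowers {z : G} (hz : z ∉ zpowers i) : z * z = a := by
  rcases hG z with rfl | rfl | h
  · exact absurd (one_mem _) hz
  · exact absurd (hi ▸ mul_mem (mem_zpowers i) (mem_zpowers i)) hz
  · exact h

theorem mul_eq_mul_inv_of_not_mem_zpowers {z : G} (hz : z ∉ zpowers i) : i * z = z * i⁻¹ := by
  have hiz : i * z ∉ zpowers i := fun h ↦ hz <| by
    simpa using mul_mem (inv_mem (mem_zpowers i)) h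
  have : i * z * i * z = z * z := by
    rw [mul_self_eq_of_not_mem_zpowers hG hi hz, ← mul_self_eq_of_not_mem_zpowers hG hi hiz,
      mul_assoc (i * z)]
  calc i * z = i * z * i * i⁻¹ := by group
    _ = z * i⁻¹ := by rw [mul_right_cancel this]

theorem mem_zpowers_of_commute (ha : a ≠ 1) {w : G} (hw : Commute i w) : w ∈ zpowers i := by
  by_contra hwi
  have : i * i = 1 := by
    have := (mul_eq_mul_inv_of_not_mem_zpowers hG hi hwi).symm.trans hw.eq
    rw [mul_right_inj, inv_eq_iff_eq_inv] at this
    exact mul_eq_one_iff_eq_inv.mpr this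
  exact ha (hi ▸ this)

theorem nonempty_quaternionGroup_mulEquiv (ha : a ≠ 1) (haa : a * a = 1) {y : G}
    (hy : y ∉ zpowers i) : Nonempty (QuaternionGroup 2 ≃* G) :=
  QuaternionGroup.nonempty_mulEquiv_of_orderOf_eq
    (orderOf_eq_four_of_mul_self_eq hi ha haa)
    (by rw [mul_self_eq_of_not_mem_zpowers hG hi hy, ← hi, sq])
    (mul_eq_mul_inv_of_not_mem_zpowers hG hi hy) hy
    fun z ↦ or_iff_not_imp_left.mpr fun hz ↦ mem_zpowers_of_commute hG hi ha <|
      .inv_mul_of_mul_eq_mul_inv (mul_eq_mul_inv_of_not_mem_zpowers hG hi hy)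
        (mul_eq_mul_inv_of_not_mem_zpowers hG hi hz)

end MulSelfEqOne

theorem nonempty_mulEquiv_of_mul_self_eq_one (hG : ∀ x : G, x = 1 ∨ x = a ∨ x * x = a)
    (ha : a ≠ 1) (haa : a * a = 1) :
    Nonempty (G ≃* Multiplicative (ZMod 2)) ∨ Nonempty (G ≃* Multiplicative (ZMod 4)) ∨
      Nonempty (G ≃* QuaternionGroup 2) := by
  by_cases hroot : ∃ i, i * i = a
  · obtain ⟨i, hi⟩ := hroot
    by_cases hcyc : ∀ x, x ∈ zpowers i
    · exact .inr (.inl (nonempty_mulEquiv_zmod_of_forall_mem_zpowers hcyc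
        (orderOf_eq_four_of_mul_self_eq hi ha haa)))
    · obtain ⟨y, hy⟩ := not_forall.mp hcyc
      exact .inr (.inr ((nonempty_quaternionGroup_mulEquiv hG hi ha haa hy).map MulEquiv.symm))
  · refine .inl (nonempty_mulEquiv_zmod_of_forall_mem_zpowers (g := a) (fun x ↦ ?_)
      (orderOf_eq_prime (by rwa [sq]) ha))
    rcases hG x with h | h | h
    · exact h ▸ one_mem _
    · exact h ▸ mem_zpowers a
    · exact absurd ⟨x, h⟩ hroot

end SquareRoots

theorem stmt_19_general (G : Type*) [Group G] (S : Finset G)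
    (hS : ∀ x ∈ S, ∀ y ∈ S, x * y ∉ S)
    (hmax : ∀ T : Finset G, (∀ x ∈ T, ∀ y ∈ T, x * y ∉ T) → S ⊆ T → S = T)
    (hcard : S.card = 1) :
    (Nonempty (G ≃* Multiplicative (ZMod 2)) ∨ Nonempty (G ≃* Multiplicative (ZMod 3)) ∨
        Nonempty (G ≃* Multiplicative (ZMod 4)) ∨ Nonempty (G ≃* QuaternionGroup 2)) ∧
      ∀ g ∈ S, (orderOf g).Prime := by
  obtain ⟨a, rfl⟩ := Finset.card_eq_one.mp hcard
  have ha : a ≠ 1 := by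
    rintro rfl
    exact hS 1 (Finset.mem_singleton_self 1) 1 (Finset.mem_singleton_self 1) (by simp)
  have hG := eq_one_or_eq_or_eq_mul_self_or_mul_self_eq_of_maximal hmax ha
  by_cases haa : a * a = 1
  · have hG' (x : G) : x = 1 ∨ x = a ∨ x * x = a := by
      rcases hG x with h | h | h | h <;> simp_all
    refine ⟨?_, by simpa [orderOf_eq_prime (by rwa [sq]) ha] using Nat.prime_two⟩
    rcases nonempty_mulEquiv_of_mul_self_eq_one hG' ha haa with h | h | h <;> simp [h]
  · refine ⟨.inr (.inl (nonempty_mulEquiv_zmod_three_of_mul_self_ne_one hG haa ha)), ?_⟩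
    simpa [orderOf_eq_three_of_mul_self_ne_one hG haa ha] using Nat.prime_three

/-- Giudici–Hart: if a finite group `G` has a maximal product-free set `S` of
cardinality one, then `G ≅ C₂`, `C₃`, `C₄` or `Q₈`, and the element of `S` has
prime order. -/
theorem stmt_19 (G : Type*) [Group G] [Fintype G] (S : Finset G)
    (hS : ∀ x ∈ S, ∀ y ∈ S, x * y ∉ S)
    (hmax : ∀ T : Finset G, (∀ x ∈ T, ∀ y ∈ T, x * y ∉ T) → S ⊆ T → S = T)
    (hcard : S.card = 1) :
    (Nonempty (G ≃* Multiplicative (ZMod 2)) ∨ Nonempty (G ≃* Multiplicative (ZMod 3)) ∨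
        Nonempty (G ≃* Multiplicative (ZMod 4)) ∨ Nonempty (G ≃* QuaternionGroup 2)) ∧
      ∀ g ∈ S, (orderOf g).Prime :=
  stmt_19_general G S hS hmax hcard
end
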